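/- arXiv:1201.1207 — 9 statements merged into one kernel-verified Lean document; each statement's English description precedes it below -/
import Mathlib

section
/- For any finite coloring of the positive natural numbers, there exist four pairwise distinct positive natural numbers e1, e2, e3, e4, all receiving the same color, such that e1 + e2 = e3 + e4. -/
/-- From a finset of ordered pairs with more than 2 elements, we can pick two
pairs that are neither equal nor swaps of each other. -/
lemma exists_two_pairs {F : Finset (ℕ × ℕ)} (hF : 2 < F.card) :
    ∃ p ∈ F, ∃ q ∈ F, p ≠ q ∧ p ≠ q.swap := by
  have h0 : 0 < F.card := lt_trans (by norm_num) hF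
  obtain ⟨p, hp⟩ := Finset.card_pos.mp h0
  have hG : 0 < (F \ {p, p.swap}).card := by
    have h3 := Finset.le_card_sdiff ({p, p.swap} : Finset (ℕ × ℕ)) F
    have h2 : ({p, p.swap} : Finset (ℕ × ℕ)).card ≤ 2 :=
      (Finset.card_insert_le _ _).trans (by simp)
    omega
  obtain ⟨q, hq⟩ := Finset.card_pos.mp hG
  rw [Finset.mem_sdiff] at hq
  obtain ⟨hqF, hq2⟩ := hq
  simp only [Finset.mem_insert, Finset.mem_singleton, not_or] at hq2
  refine ⟨p, hp, q, hqF, fun h => hq2.1 h.symm, fun h => hq2.2 ?_⟩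
  rw [h, Prod.swap_swap]

lemma schur_like_nat (c : ℕ) (hc : 0 < c) (COL : ℕ → Fin c) :
    ∃ a b x y : ℕ,
      a ≠ b ∧ a ≠ x ∧ a ≠ y ∧ b ≠ x ∧ b ≠ y ∧ x ≠ y ∧
      COL a = COL b ∧ COL b = COL x ∧ COL x = COL y ∧
      a + b = x + y := by
  set k := 6 * c with hk
  set N := c * k with hN
  -- pigeonhole: some color class within range N has at least k elements
  have hmaps : ∀ n ∈ Finset.range N, COL n ∈ (Finset.univ : Finset (Fin c)) := by
    intro n _; exact Finset.mem_univ _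
  obtain ⟨q0, -, hq0⟩ :=
    Finset.exists_le_card_fiber_of_mul_le_card_of_maps_to hmaps
      ⟨⟨0, hc⟩, Finset.mem_univ _⟩
      (show (Finset.univ : Finset (Fin c)).card * k ≤ (Finset.range N).card by
        simp [hN])
  set S := (Finset.range N).filter (fun n => COL n = q0) with hS
  -- pigeonhole on sums of distinct pairs from S
  have hoff : k * k - k ≤ S.offDiag.card := by
    rw [Finset.offDiag_card]
    calc k * k - k = k * (k - 1) := by rw [Nat.mul_sub, mul_one]
      _ ≤ S.card * (S.card - 1) :=
          Nat.mul_le_mul hq0 (Nat.sub_le_sub_right hq0 1)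
      _ = S.card * S.card - S.card := by rw [Nat.mul_sub, mul_one]
  have hmaps2 : ∀ p ∈ S.offDiag, p.1 + p.2 ∈ Finset.range (2 * N) := by
    intro p hp
    rw [Finset.mem_offDiag] at hp
    have h1 : p.1 ∈ Finset.range N := Finset.mem_of_mem_filter _ hp.1
    have h2 : p.2 ∈ Finset.range N := Finset.mem_of_mem_filter _ hp.2.1
    rw [Finset.mem_range] at *
    omega
  have hcard : (Finset.range (2 * N)).card * 2 < S.offDiag.card := by
    have hbig : 2 * N * 2 < k * k - k := by
      have h1 : k ≤ k * k := Nat.le_mul_of_pos_left _ (by omega)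
      simp only [hN, hk] at h1 ⊢
      zify [h1]
      have hc' : (1 : ℤ) ≤ c := by exact_mod_cast hc
      nlinarith
    rw [Finset.card_range]
    omega
  obtain ⟨s, -, hs⟩ :=
    Finset.exists_lt_card_fiber_of_mul_lt_card_of_maps_to hmaps2 hcard
  obtain ⟨p, hp, r, hr, hpr, hpr'⟩ := exists_two_pairs hs
  simp only [Finset.mem_filter] at hp hr
  obtain ⟨hpO, hpsum⟩ := hp
  obtain ⟨hrO, hrsum⟩ := hr
  rw [Finset.mem_offDiag] at hpO hrO
  obtain ⟨hp1, hp2, hpne⟩ := hpO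
  obtain ⟨hr1, hr2, hrne⟩ := hrO
  simp only [hS, Finset.mem_filter] at hp1 hp2 hr1 hr2
  have hne1 : ¬(p.1 = r.1 ∧ p.2 = r.2) := by
    intro ⟨h1, h2⟩; exact hpr (Prod.ext h1 h2)
  have hne2 : ¬(p.1 = r.2 ∧ p.2 = r.1) := by
    intro ⟨h1, h2⟩; exact hpr' (Prod.ext h1 h2)
  refine ⟨p.1, p.2, r.1, r.2, hpne, ?_, ?_, ?_, ?_, hrne,
    hp1.2.trans hp2.2.symm, hp2.2.trans hr1.2.symm, hr1.2.trans hr2.2.symm, ?_⟩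
  all_goals omega

/-- For any finite coloring of the positive natural numbers, there exist four
pairwise distinct positive natural numbers `e1, e2, e3, e4`, all of the same
color, with `e1 + e2 = e3 + e4`. -/
theorem schur_like_four (c : ℕ) (COL : ℕ+ → Fin c) :
    ∃ e1 e2 e3 e4 : ℕ+,
      e1 ≠ e2 ∧ e1 ≠ e3 ∧ e1 ≠ e4 ∧ e2 ≠ e3 ∧ e2 ≠ e4 ∧ e3 ≠ e4 ∧
      COL e1 = COL e2 ∧ COL e2 = COL e3 ∧ COL e3 = COL e4 ∧
      e1 + e2 = e3 + e4 := by
  rcases Nat.eq_zero_or_pos c with rfl | hc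
  · exact absurd (COL 1).2 (by omega)
  obtain ⟨a, b, x, y, hab, hax, hay, hbx, hby, hxy, c1, c2, c3, hsum⟩ :=
    schur_like_nat c hc (fun n => COL n.succPNat)
  have hinj := Nat.succPNat_injective
  refine ⟨a.succPNat, b.succPNat, x.succPNat, y.succPNat,
    fun h => hab (hinj h), fun h => hax (hinj h), fun h => hay (hinj h),
    fun h => hbx (hinj h), fun h => hby (hinj h), fun h => hxy (hinj h),
    c1, c2, c3, ?_⟩
  apply PNat.coe_injective
  push_cast [Nat.succPNat_coe]
  omega
end

section
/- Assume the Continuum Hypothesis (2^ℵ0 = ℵ1). Then there exists an ℵ0-coloring of the real numbers such that there are no four pairwise distinct reals e1, e2, e3, e4 of the same color satisfying e1 + e2 = e3 + e4. -/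
/-!
Under CH the Hamel basis of `ℝ` over `ℚ` can be indexed by `ω₁`, so every basis index has only
countably many predecessors. Colour `x` by its coordinate vector, relabelled through an injection
into `ℕ` of the indices up to its largest one; the colour then determines the leading coefficient,
and determines `x` once its largest index is known. If `e₁ + e₂ = e₃ + e₄` with all four of one
colour and leading coefficient `q ≠ 0`, compare coordinates at the largest index `β` that occurs:
each `eₖ` contributes `q` or `0` there, so `β` is the largest index of some `eₖ` on each side, and
those two are equal.
-/

open Cardinal Module

def HasMonochromaticAdditiveQuadruple {V C : Type*} [Add V] (col : V → C) : Prop :=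
  ∃ e1 e2 e3 e4 : V,
    e1 ≠ e2 ∧ e1 ≠ e3 ∧ e1 ≠ e4 ∧ e2 ≠ e3 ∧ e2 ≠ e4 ∧ e3 ≠ e4 ∧
    col e1 = col e2 ∧ col e2 = col e3 ∧ col e3 = col e4 ∧
    e1 + e2 = e3 + e4

theorem HasMonochromaticAdditiveQuadruple.of_comp {V C D : Type*} [Add V] {col : V → C}
    {f : C → D} (hf : Function.Injective f) (h : HasMonochromaticAdditiveQuadruple (f ∘ col)) :
    HasMonochromaticAdditiveQuadruple col := by
  obtain ⟨e1, e2, e3, e4, h12, h13, h14, h23, h24, h34, c12, c23, c34, hsum⟩ := h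
  exact ⟨e1, e2, e3, e4, h12, h13, h14, h23, h24, h34, hf c12, hf c23, hf c34, hsum⟩

theorem or_and_or_of_ite_add_ite_eq {K : Type*} [Ring K] [NoZeroDivisors K] [CharZero K] {q : K}
    (hq : q ≠ 0) {P₁ P₂ P₃ P₄ : Prop} [Decidable P₁] [Decidable P₂] [Decidable P₃] [Decidable P₄]
    (h : (if P₁ then q else 0) + (if P₂ then q else 0) =
      (if P₃ then q else 0) + (if P₄ then q else 0))
    (hP : P₁ ∨ P₂ ∨ P₃ ∨ P₄) : (P₁ ∨ P₂) ∧ (P₃ ∨ P₄) := by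
  by_cases P₁ <;> by_cases P₂ <;> by_cases P₃ <;> by_cases P₄ <;>
    simp_all [add_self_eq_zero, eq_comm (a := (0 : K))]

section NatLabel

variable {ι : Type*} [LinearOrder ι]

theorem exists_injOn_coe_le_of_countable_Iio (hι : ∀ i : ι, (Set.Iio i).Countable)
    (t : WithBot ι) :
    ∃ f : ι → ℕ, Set.InjOn f {j | (j : WithBot ι) ≤ t} ∧ ∀ j : ι, (j : WithBot ι) = t → f j = 0 := by
  obtain ⟨g, hg⟩ : ∃ g : ι → ℕ, Set.InjOn g {j | (j : WithBot ι) < t} := by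
    refine Set.countable_iff_exists_injOn.mp ?_
    induction t using WithBot.recBotCoe with
    | bot => simp
    | coe i => simpa [Set.Iio] using hι i
  classical
  refine ⟨fun j => if (j : WithBot ι) = t then 0 else g j + 1, fun a ha b hb hab => ?_,
    fun j hj => if_pos hj⟩
  simp only at hab
  split_ifs at hab with hat hbt hbt
  · exact WithBot.coe_injective (hat.trans hbt.symm)
  · exact hg (lt_of_le_of_ne ha hat) (lt_of_le_of_ne hb hbt) (Nat.succ_injective hab)

variable (hι : ∀ i : ι, (Set.Iio i).Countable)

noncomputable def natLabel (t : WithBot ι) : ι → ℕ :=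
  (exists_injOn_coe_le_of_countable_Iio hι t).choose

theorem injOn_natLabel (t : WithBot ι) : Set.InjOn (natLabel hι t) {j | (j : WithBot ι) ≤ t} :=
  (exists_injOn_coe_le_of_countable_Iio hι t).choose_spec.1

theorem natLabel_coe_self (i : ι) : natLabel hι i i = 0 :=
  (exists_injOn_coe_le_of_countable_Iio hι i).choose_spec.2 i rfl

end NatLabel

namespace Module.Basis

variable {ι K V : Type*} [LinearOrder ι] [Ring K] [AddCommGroup V] [Module K V]
  {b : Basis ι K V}

variable (b) in
noncomputable def topIndex (x : V) : WithBot ι := (b.repr x).support.max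

theorem le_topIndex {x : V} {j : ι} (h : b.repr x j ≠ 0) : (j : WithBot ι) ≤ b.topIndex x :=
  Finset.le_max (Finsupp.mem_support_iff.mpr h)

theorem repr_topIndex_ne_zero {x : V} {i : ι} (h : b.topIndex x = i) : b.repr x i ≠ 0 :=
  Finsupp.mem_support_iff.mp (Finset.mem_of_max h)

theorem topIndex_ne_bot {x : V} (hx : x ≠ 0) : b.topIndex x ≠ ⊥ := by
  simpa [topIndex, Finset.max_eq_bot] using hx

theorem support_repr_subset_topIndex (x : V) :
    ((b.repr x).support : Set ι) ⊆ {j | (j : WithBot ι) ≤ b.topIndex x} :=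
  fun _ hj => le_topIndex (Finsupp.mem_support_iff.mp hj)

section Coloring

variable {hι : ∀ i : ι, (Set.Iio i).Countable}

variable (b hι) in
/-- The relabelling sends the leading index to `0`, so the colour records the leading
coefficient. -/
noncomputable def countableColoring (x : V) : ℕ →₀ K :=
  (b.repr x).mapDomain (natLabel hι (b.topIndex x))

theorem countableColoring_apply_zero {x : V} {i : ι} (h : b.topIndex x = i) :
    b.countableColoring hι x 0 = b.repr x i := by
  have hsupp := support_repr_subset_topIndex (b := b) x
  rw [countableColoring, h, ← natLabel_coe_self hι i] at *
  exact Finsupp.mapDomain_apply' _ _ hsupp (injOn_natLabel hι _) (le_refl (i : WithBot ι))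

theorem eq_of_countableColoring_eq {x y : V}
    (hc : b.countableColoring hι x = b.countableColoring hι y)
    (ht : b.topIndex x = b.topIndex y) : x = y := by
  have hsupp := support_repr_subset_topIndex (b := b) y
  rw [countableColoring, countableColoring, ht] at hc
  rw [← ht] at hsupp hc
  exact b.repr.injective (Finsupp.mapDomain_injOn _ (injOn_natLabel hι _)
    (support_repr_subset_topIndex x) hsupp hc)

variable (hι) in
theorem repr_eq_ite_of_topIndex_le {x : V} {i : ι} (h : b.topIndex x ≤ i) :
    b.repr x i = if b.topIndex x = i then b.countableColoring hι x 0 else 0 := by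
  split_ifs with hi
  · exact (countableColoring_apply_zero hi).symm
  · by_contra hne
    exact hi (le_antisymm h (le_topIndex hne))

theorem exists_topIndex_eq_on_both_sides_of_add_eq_add [NoZeroDivisors K] [CharZero K]
    {e1 e2 e3 e4 : V} {c : ℕ →₀ K} (hne : e1 ≠ e2) (c1 : b.countableColoring hι e1 = c)
    (c2 : b.countableColoring hι e2 = c) (c3 : b.countableColoring hι e3 = c)
    (c4 : b.countableColoring hι e4 = c) (hsum : e1 + e2 = e3 + e4) :
    ∃ β, (b.topIndex e1 = β ∨ b.topIndex e2 = β) ∧ (b.topIndex e3 = β ∨ b.topIndex e4 = β) := by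
  set β := max (max (b.topIndex e1) (b.topIndex e2)) (max (b.topIndex e3) (b.topIndex e4))
  have hle : b.topIndex e1 ≤ β ∧ b.topIndex e2 ≤ β ∧ b.topIndex e3 ≤ β ∧ b.topIndex e4 ≤ β := by
    grind
  have hattained : b.topIndex e1 = β ∨ b.topIndex e2 = β ∨ b.topIndex e3 = β ∨
      b.topIndex e4 = β := by
    grind
  obtain ⟨i, hi⟩ : ∃ i : ι, (i : WithBot ι) = β := by
    refine WithBot.ne_bot_iff_exists.mp ?_
    rcases eq_or_ne e1 0 with h1 | h1
    · exact ne_bot_of_le_ne_bot (topIndex_ne_bot (h1 ▸ hne.symm)) hle.2.1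
    · exact ne_bot_of_le_ne_bot (topIndex_ne_bot h1) hle.1
  rw [← hi] at hle hattained
  have hq : c 0 ≠ 0 := by
    obtain ⟨e, hec, he⟩ : ∃ e, b.countableColoring hι e = c ∧ b.topIndex e = i := by
      rcases hattained with h | h | h | h
      exacts [⟨e1, c1, h⟩, ⟨e2, c2, h⟩, ⟨e3, c3, h⟩, ⟨e4, c4, h⟩]
    rw [← hec, countableColoring_apply_zero he]
    exact repr_topIndex_ne_zero he
  have hcoeff := congrArg (fun v => b.repr v i) hsum
  simp only [map_add, Finsupp.add_apply] at hcoeff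
  rw [repr_eq_ite_of_topIndex_le hι hle.1, repr_eq_ite_of_topIndex_le hι hle.2.1,
    repr_eq_ite_of_topIndex_le hι hle.2.2.1, repr_eq_ite_of_topIndex_le hι hle.2.2.2,
    c1, c2, c3, c4] at hcoeff
  exact ⟨i, or_and_or_of_ite_add_ite_eq hq hcoeff hattained⟩

theorem not_hasMonochromaticAdditiveQuadruple_countableColoring [NoZeroDivisors K] [CharZero K] :
    ¬ HasMonochromaticAdditiveQuadruple (b.countableColoring hι) := by
  rintro ⟨e1, e2, e3, e4, h12, h13, h14, h23, h24, h34, c12, c23, c34, hsum⟩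
  have c3 := c23.symm.trans c12.symm
  have c4 := c34.symm.trans c3
  obtain ⟨β, t1 | t2, t3 | t4⟩ :=
    exists_topIndex_eq_on_both_sides_of_add_eq_add h12 rfl c12.symm c3 c4 hsum
  · exact h13 (eq_of_countableColoring_eq c3.symm (t1.trans t3.symm))
  · exact h14 (eq_of_countableColoring_eq c4.symm (t1.trans t4.symm))
  · exact h23 (eq_of_countableColoring_eq (c12.symm.trans c3.symm) (t2.trans t3.symm))
  · exact h24 (eq_of_countableColoring_eq (c12.symm.trans c4.symm) (t2.trans t4.symm))

end Coloring

end Module.Basis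

theorem Module.Basis.exists_nat_coloring {ι K V : Type*} [LinearOrder ι] [Ring K] [Countable K]
    [NoZeroDivisors K] [CharZero K] [AddCommGroup V] [Module K V] (b : Basis ι K V)
    (hι : ∀ i : ι, (Set.Iio i).Countable) :
    ∃ col : V → ℕ, ¬ HasMonochromaticAdditiveQuadruple col := by
  obtain ⟨f, hf⟩ := Countable.exists_injective_nat (ℕ →₀ K)
  exact ⟨f ∘ b.countableColoring hι, fun h =>
    b.not_hasMonochromaticAdditiveQuadruple_countableColoring (h.of_comp hf)⟩

theorem Cardinal.exists_linearOrder_countable_Iio_of_mk_le_aleph_one {α : Type*}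
    (h : #α ≤ ℵ₁) : ∃ _ : LinearOrder α, ∀ a : α, (Set.Iio a).Countable := by
  obtain ⟨E⟩ : Nonempty (α ↪ (ℵ₁ : Cardinal).ord.ToType) := by
    rwa [← le_def, mk_toType, card_ord]
  let _ := LinearOrder.lift' E E.injective
  refine ⟨‹_›, fun a => ?_⟩
  have hlt : #(Set.Iio (E a)) < ℵ₁ := by
    simpa using mk_Iio_lt (E a) (by rw [mk_ord_toType, Ordinal.type_toType])
  exact (le_aleph0_iff_set_countable.mp (lt_aleph_one_iff.mp hlt)).preimage E.injective

theorem Cardinal.mk_real_eq_aleph_one (ch : (2 : Cardinal.{u}) ^ ℵ₀ = ℵ₁) : #ℝ = ℵ₁ := by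
  apply lift_injective.{u}
  rw [mk_real, lift_continuum, ← two_power_aleph0, ch, lift_aleph, Ordinal.lift_one]

/-- Assuming CH, there is an `ℵ₀`-coloring of `ℝ` with no four pairwise distinct
monochromatic reals satisfying `e1 + e2 = e3 + e4`. -/
theorem CH_implies_not_S (ch : (2 : Cardinal) ^ Cardinal.aleph0 = Cardinal.aleph 1) :
    ∃ COL : ℝ → ℕ,
      ¬ ∃ e1 e2 e3 e4 : ℝ,
        e1 ≠ e2 ∧ e1 ≠ e3 ∧ e1 ≠ e4 ∧ e2 ≠ e3 ∧ e2 ≠ e4 ∧ e3 ≠ e4 ∧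
        COL e1 = COL e2 ∧ COL e2 = COL e3 ∧ COL e3 = COL e4 ∧
        e1 + e2 = e3 + e4 := by
  obtain ⟨_, hι⟩ := exists_linearOrder_countable_Iio_of_mk_le_aleph_one
    ((mk_set_le (Basis.ofVectorSpaceIndex ℚ ℝ)).trans (mk_real_eq_aleph_one ch).le)
  exact (Basis.ofVectorSpace ℚ ℝ).exists_nat_coloring hι
end

section
/- Let n ≥ 2 and let a1, ..., an be nonzero real numbers. Assume the Continuum Hypothesis (2^ℵ0 = ℵ1). Then there exists an ℵ0-coloring of the real numbers such that there are no pairwise distinct reals e1, ..., en of the same color satisfying a1·e1 + a2·e2 + ... + an·en = 0. -/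
/-!
Under CH, `ℝ` is the union of an `ω₁`-chain of countable subfields `X x`, each generated by the
coefficients and the first `x` reals of an enumeration of length `ω₁`. The rank of a real is the
least `x` with `r ∈ X x`; each rank class is countable, so reals can be coloured such that colour
and rank together determine the real. Distinct reals of one colour then have distinct ranks. In a
solution, the equation writes the term of largest rank as an `X m`-linear combination of the
others, where `m` is the second largest rank, contradicting the minimality of its rank.
-/

open Cardinal Function Set

theorem exists_injective_prodMk_of_countable_fibers {α β : Type*} (f : α → β)
    (hf : ∀ b, (f ⁻¹' {b}).Countable) : ∃ c : α → ℕ, Injective fun x ↦ (f x, c x) := by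
  choose g hg using fun b ↦ countable_iff_exists_injOn.1 (hf b)
  refine ⟨fun x ↦ g (f x) x, fun x y hxy ↦ ?_⟩
  simp only [Prod.mk.injEq] at hxy
  obtain ⟨hfxy, hgxy⟩ := hxy
  rw [hfxy] at hgxy
  exact hg (f y) hfxy rfl hgxy

theorem sum_mul_ne_zero_of_injective_rank {F T : Type*} [Field F] [LinearOrder T]
    {X : T → Subfield F} {ρ : F → T} (hρ : ∀ r x, r ∈ X x ↔ ρ r ≤ x) {n : ℕ} (hn : 2 ≤ n)
    {a : Fin n → F} (ha : ∀ i, a i ≠ 0) (haX : ∀ i x, a i ∈ X x) {e : Fin n → F}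
    (he : Injective (ρ ∘ e)) : ∑ i, a i * e i ≠ 0 := by
  intro hsum
  have : Nonempty (Fin n) := ⟨⟨0, by omega⟩⟩
  obtain ⟨j, hj⟩ := Finite.exists_max (ρ ∘ e)
  have hne : (Finset.univ.erase j).Nonempty := by
    rw [← Finset.card_pos, Finset.card_erase_of_mem (Finset.mem_univ j), Finset.card_univ,
      Fintype.card_fin]
    omega
  set m := (Finset.univ.erase j).sup' hne (ρ ∘ e)
  have hm : m < ρ (e j) := (Finset.sup'_lt_iff hne).2 fun i hi ↦
    (hj i).lt_of_ne (he.ne (Finset.ne_of_mem_erase hi))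
  have hej : e j = -(a j)⁻¹ * ∑ i ∈ Finset.univ.erase j, a i * e i := by
    rw [← Finset.add_sum_erase _ _ (Finset.mem_univ j)] at hsum
    field_simp [ha j]
    linear_combination hsum
  have hejm : e j ∈ X m := by
    rw [hej]
    refine mul_mem (neg_mem (inv_mem (haX j m))) (sum_mem fun i hi ↦ mul_mem (haX i m) ?_)
    exact (hρ _ _).2 (Finset.le_sup' (ρ ∘ e) hi)
  exact hm.not_ge ((hρ _ _).1 hejm)

section Enumeration

variable {F T : Type*} [Field F] [LinearOrder T] (S : Set F) (φ : T → F)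

def enumSubfield (x : T) : Subfield F :=
  Subfield.closure (φ '' Iic x ∪ S)

theorem enumSubfield_mono : Monotone (enumSubfield S φ) := fun _ _ hxy ↦
  Subfield.closure_mono (union_subset_union_left _ (image_mono (Iic_subset_Iic.2 hxy)))

theorem subset_enumSubfield (x : T) : S ⊆ enumSubfield S φ x :=
  subset_union_right.trans Subfield.subset_closure

theorem countable_enumSubfield {x : T} (hS : S.Countable) (hx : (Iic x).Countable) :
    (enumSubfield S φ x : Set F).Countable := by
  have hgen : (φ '' Iic x ∪ S).Countable := (hx.image φ).union hS
  rw [← le_aleph0_iff_set_countable] at hgen ⊢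
  exact (Subfield.cardinalMk_closure_le_max _).trans (max_le hgen le_rfl)

variable [WellFoundedLT T] {φ}

noncomputable def enumRank (hφ : Surjective φ) (r : F) : T :=
  wellFounded_lt.min {x | r ∈ enumSubfield S φ x} <| by
    obtain ⟨x, rfl⟩ := hφ r
    exact ⟨x, Subfield.subset_closure (Or.inl ⟨x, mem_Iic.2 le_rfl, rfl⟩)⟩

theorem mem_enumSubfield_iff_enumRank_le (hφ : Surjective φ) (r : F) (x : T) :
    r ∈ enumSubfield S φ x ↔ enumRank S hφ r ≤ x :=
  ⟨fun hr ↦ wellFounded_lt.min_le (s := {y | r ∈ enumSubfield S φ y}) hr,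
    fun hle ↦ enumSubfield_mono S φ hle (wellFounded_lt.min_mem {y | r ∈ enumSubfield S φ y} _)⟩

end Enumeration

theorem exists_coloring_no_mono_solution_of_enum {F T : Type*} [Field F] [LinearOrder T]
    [WellFoundedLT T] (hT : ∀ x : T, (Iic x).Countable) {φ : T → F} (hφ : Surjective φ)
    {n : ℕ} (hn : 2 ≤ n) (a : Fin n → F) (ha : ∀ i, a i ≠ 0) :
    ∃ c : F → ℕ, ¬ ∃ e : Fin n → F,
      Injective e ∧ (∀ i j, c (e i) = c (e j)) ∧ ∑ i, a i * e i = 0 := by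
  set ρ := enumRank (range a) hφ
  have hρ := mem_enumSubfield_iff_enumRank_le (range a) hφ
  have hfiber (x : T) : (ρ ⁻¹' {x}).Countable :=
    (countable_enumSubfield _ φ (countable_range a) (hT x)).mono fun r hr ↦ (hρ r x).2 hr.le
  obtain ⟨c, hc⟩ := exists_injective_prodMk_of_countable_fibers ρ hfiber
  refine ⟨c, ?_⟩
  rintro ⟨e, he, hec, hsum⟩
  refine sum_mul_ne_zero_of_injective_rank hρ hn ha
    (fun i x ↦ subset_enumSubfield _ φ x (mem_range_self i)) (fun i j hij ↦ ?_) hsum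
  exact he (hc (Prod.ext hij (hec i j)))

theorem countable_Iic_toType_ord_aleph_one (x : (ℵ₁ : Cardinal).ord.ToType) :
    (Iic x).Countable := by
  rw [← Iio_insert]
  refine .insert _ (le_aleph0_iff_set_countable.1 (lt_aleph_one_iff.1 ?_))
  simpa using mk_Iio_lt x (by simp)

theorem exists_coloring_no_mono_solution_of_mk_le_aleph_one {F : Type*} [Field F]
    (hF : #F ≤ ℵ₁) {n : ℕ} (hn : 2 ≤ n) (a : Fin n → F) (ha : ∀ i, a i ≠ 0) :
    ∃ c : F → ℕ, ¬ ∃ e : Fin n → F,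
      Injective e ∧ (∀ i j, c (e i) = c (e j)) ∧ ∑ i, a i * e i = 0 := by
  rw [← mk_ord_toType ℵ₁] at hF
  obtain ⟨ι⟩ := hF
  exact exists_coloring_no_mono_solution_of_enum countable_Iic_toType_ord_aleph_one
    (invFun_surjective ι.injective) hn a ha

/-- Assuming CH, for any `n ≥ 2` and nonzero reals `a 0, …, a (n-1)`, there is an
`ℵ₀`-coloring of `ℝ` with no pairwise distinct monochromatic reals `e 0, …, e (n-1)`
satisfying `∑ i, a i * e i = 0`. -/
theorem CH_implies_no_mono_solution (n : ℕ) (hn : 2 ≤ n) (a : Fin n → ℝ)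
    (ha : ∀ i, a i ≠ 0)
    (ch : (2 : Cardinal) ^ Cardinal.aleph0 = Cardinal.aleph 1) :
    ∃ COL : ℝ → ℕ,
      ¬ ∃ e : Fin n → ℝ,
        Function.Injective e ∧
        (∀ i j, COL (e i) = COL (e j)) ∧
        ∑ i, a i * e i = 0 := by
  rw [two_power_aleph0, ← lift_continuum.{_, 0}, lift_eq_aleph_one, ← mk_real] at ch
  exact exists_coloring_no_mono_solution_of_mk_le_aleph_one ch.le hn a ha
end

section
/- Fix an integer k ≥ 1. The following are equivalent: (1) 2^ℵ0 > ℵ1; (2) for every ℵ0-coloring of ℝ^k, there exist four pairwise distinct vectors e1, e2, e3, e4 ∈ ℝ^k of the same color such that e1 + e2 = e3 + e4. -/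
/-!
Let `c` be a countable colouring of an abelian group `V` with no monochromatic solution of
`e₁ + e₂ = e₃ + e₄` in four distinct elements. For `d ≠ 0`, two points `x ≠ y` with
`c (x - d) = c x = c y = c (y - d)` satisfy `x - y = ±d`, since otherwise `(x, y - d, y, x - d)`
is such a solution; hence `{x | c (x - d) = c x}` is countable. If `H ⊆ V` is uncountable,
pigeonhole on `g + H` gives `h₁ ≠ h₂` in `H` with `c (g + h₁) = c (g + h₂)`, so `V` is covered by
`#H` countable sets and `#V ≤ #H`; taking `#H = ℵ₁` rules out `ℵ₁ < #V`.

Conversely, if `#V ≤ ℵ₁`, write `V` as an increasing `ω₁`-union of countable subgroups `G o`, and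
colour `x` injectively inside the first `G o` containing it. Same colour and same rank forces
equality, so a monochromatic solution has four distinct ranks; but each term lies in the
subgroup generated by the other three, so its rank is at most the largest of theirs.
-/

open Cardinal Set

universe u v

variable {V : Type u} {ι : Type v}

def IsMonoAddQuadruple [Add V] (c : V → ι) (e1 e2 e3 e4 : V) : Prop :=
  e1 ≠ e2 ∧ e1 ≠ e3 ∧ e1 ≠ e4 ∧ e2 ≠ e3 ∧ e2 ≠ e4 ∧ e3 ≠ e4 ∧
    c e1 = c e2 ∧ c e2 = c e3 ∧ c e3 = c e4 ∧ e1 + e2 = e3 + e4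

section NoMonoAddQuadruple

variable [AddCommGroup V] {c : V → ι} (hc : ∀ e1 e2 e3 e4, ¬IsMonoAddQuadruple c e1 e2 e3 e4)
include hc

theorem eq_or_eq_add_or_eq_add_of_color_sub_eq {d a b : V} (hd : d ≠ 0) (ha : c (a - d) = c a)
    (hb : c (b - d) = c b) (hab : c a = c b) : a = b ∨ a = b + d ∨ b = a + d := by
  by_contra! h
  refine hc a (b - d) b (a - d) ⟨?_, h.1, ?_, ?_, ?_, ?_, hab.trans hb.symm, hb,
    hab.symm.trans ha.symm, by abel⟩ <;> grind

theorem finite_setOf_color_sub_eq {d : V} (hd : d ≠ 0) (i : ι) :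
    {x | c (x - d) = c x ∧ c x = i}.Finite := by
  rcases eq_empty_or_nonempty {x | c (x - d) = c x ∧ c x = i} with h | ⟨u, hu, rfl⟩
  · simp [h]
  refine (toFinite {u, u + d, u - d}).subset fun x ⟨hx, hxu⟩ => ?_
  rcases eq_or_eq_add_or_eq_add_of_color_sub_eq hc hd hx hu hxu with h | h | h
  · exact .inl h
  · exact .inr (.inl h)
  · exact .inr (.inr (eq_sub_of_add_eq h.symm))

theorem countable_setOf_color_sub_eq [Countable ι] {d : V} (hd : d ≠ 0) :
    {x | c (x - d) = c x}.Countable := by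
  have : {x | c (x - d) = c x} = ⋃ i, {x | c (x - d) = c x ∧ c x = i} := by ext; simp
  rw [this]
  exact countable_iUnion fun i => (finite_setOf_color_sub_eq hc hd i).countable

theorem mk_le_mk_of_aleph0_lt_mk [Countable ι] {H : Set V} (hH : ℵ₀ < #H) : #V ≤ #H := by
  let P := {p : H × H // p.1 ≠ p.2}
  let piece (p : P) : Set V := {g | c (g + p.1.1) = c (g + p.1.2)}
  have piece_countable (p : P) : (piece p).Countable := by
    have hd : (p.1.2 : V) - p.1.1 ≠ 0 := sub_ne_zero.2 (Subtype.coe_injective.ne p.2.symm)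
    refine ((countable_setOf_color_sub_eq hc hd).preimage
      (add_left_injective (p.1.2 : V))).mono fun g (hg : c (g + p.1.1) = c (g + p.1.2)) => ?_
    show c (g + p.1.2 - (p.1.2 - p.1.1)) = c (g + p.1.2)
    rwa [show g + p.1.2 - (p.1.2 - p.1.1) = g + p.1.1 by abel]
  have cover : (univ : Set V) ⊆ ⋃ p, piece p := by
    intro g _
    have : ¬(fun h : H => c (g + h)).Injective := fun hinj =>
      hH.not_ge (mk_le_aleph0_iff.2 hinj.countable)
    obtain ⟨h₁, h₂, h, hne⟩ := Function.not_injective_iff.1 this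
    exact mem_iUnion.2 ⟨⟨(h₁, h₂), hne⟩, h⟩
  calc #V = #(univ : Set V) := mk_univ.symm
    _ ≤ #(⋃ p, piece p) := mk_le_mk_of_subset cover
    _ ≤ #P * ⨆ p, #(piece p) := mk_iUnion_le _
    _ ≤ #(H × H) * ℵ₀ := by
      gcongr
      · exact mk_subtype_le _
      · exact ciSup_le' fun p => mk_le_aleph0_iff.2 (piece_countable p).to_subtype
    _ = #H := by rw [mk_prod, lift_id, mul_eq_self hH.le, mul_eq_left hH.le hH.le aleph0_ne_zero]

end NoMonoAddQuadruple

theorem exists_isMonoAddQuadruple_of_aleph_one_lt_mk [AddCommGroup V] [Countable ι]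
    (hV : ℵ₁ < #V) (c : V → ι) : ∃ e1 e2 e3 e4, IsMonoAddQuadruple c e1 e2 e3 e4 := by
  by_contra! hc
  obtain ⟨H, hH⟩ := le_mk_iff_exists_set.1 hV.le
  have := mk_le_mk_of_aleph0_lt_mk hc (aleph0_lt_aleph_one.trans_eq hH.symm)
  exact (this.trans_eq hH).not_gt hV

-- The hypotheses are `rank_le_max_of_add_eq_add` applied to the four rearrangements of
-- `a + b = c + d`.
theorem eq_or_eq_of_le_max_of_le_max {α : Type*} [LinearOrder α] {a b c d : α}
    (ha : a ≤ max b (max c d)) (hb : b ≤ max a (max c d)) (hc : c ≤ max d (max a b))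
    (hd : d ≤ max c (max a b)) : a = b ∨ a = c ∨ a = d ∨ b = c ∨ b = d ∨ c = d := by
  grind

theorem Monotone.exists_forall_mem_iff_le {κ α : Type*} [LinearOrder κ] [WellFoundedLT κ]
    {G : κ → Set α} (hG : Monotone G) (hcover : ∀ x, ∃ o, x ∈ G o) :
    ∃ ρ : α → κ, ∀ x o, x ∈ G o ↔ ρ x ≤ o :=
  ⟨fun x => wellFounded_lt.min _ (hcover x), fun x _ =>
    ⟨fun hx => not_lt.1 (wellFounded_lt.not_lt_min {o | x ∈ G o} hx),
      fun h => hG h (wellFounded_lt.min_mem {o | x ∈ G o} (hcover x))⟩⟩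

theorem AddSubgroup.countable_closure [AddCommGroup V] {s : Set V} (hs : s.Countable) :
    Countable (AddSubgroup.closure s) := by
  have := hs.to_subtype
  rw [← Submodule.span_int_eq_addSubgroupClosure, ← Subtype.range_coe (s := s)]
  exact inferInstanceAs (Countable (Submodule.span ℤ (range ((↑) : s → V))))

section Rank

variable [AddCommGroup V] {κ : Type*} [LinearOrder κ] {G : κ → AddSubgroup V} {ρ : V → κ}

theorem rank_le_max_of_add_eq_add (hρ : ∀ x o, x ∈ G o ↔ ρ x ≤ o) {a b c d : V}
    (h : a + b = c + d) : ρ a ≤ max (ρ b) (max (ρ c) (ρ d)) := by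
  rw [← hρ, eq_sub_of_add_eq h]
  refine sub_mem (add_mem ?_ ?_) ?_ <;> rw [hρ] <;> simp

theorem exists_coloring_of_rank (hρ : ∀ x o, x ∈ G o ↔ ρ x ≤ o) (hG : ∀ o, Countable (G o)) :
    ∃ c : V → ℕ, ∀ e1 e2 e3 e4, ¬IsMonoAddQuadruple c e1 e2 e3 e4 := by
  choose f hf using fun o => countable_iff_exists_injOn.1 (countable_coe_iff.1 (hG o))
  refine ⟨fun x => f (ρ x) x,
    fun e1 e2 e3 e4 ⟨h12, h13, h14, h23, h24, h34, c12, c23, c34, hsum⟩ => ?_⟩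
  have eq_of_rank_eq {x y : V} (hxy : f (ρ x) x = f (ρ y) y) (h : ρ x = ρ y) : x = y :=
    hf (ρ x) ((hρ _ _).2 le_rfl) ((hρ _ _).2 h.ge) (by rwa [← h] at hxy)
  rcases eq_or_eq_of_le_max_of_le_max (rank_le_max_of_add_eq_add hρ hsum)
    (rank_le_max_of_add_eq_add hρ ((add_comm _ _).trans hsum))
    (rank_le_max_of_add_eq_add hρ hsum.symm)
    (rank_le_max_of_add_eq_add hρ ((add_comm _ _).trans hsum.symm)) with h | h | h | h | h | h
  · exact h12 (eq_of_rank_eq c12 h)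
  · exact h13 (eq_of_rank_eq (c12.trans c23) h)
  · exact h14 (eq_of_rank_eq (c12.trans (c23.trans c34)) h)
  · exact h23 (eq_of_rank_eq c23 h)
  · exact h24 (eq_of_rank_eq (c23.trans c34) h)
  · exact h34 (eq_of_rank_eq c34 h)

end Rank

theorem exists_coloring_of_mk_le_aleph_one [AddCommGroup V] (hV : #V ≤ ℵ₁) :
    ∃ c : V → ℕ, ∀ e1 e2 e3 e4, ¬IsMonoAddQuadruple c e1 e2 e3 e4 := by
  obtain ⟨φ⟩ : Nonempty (V ↪ (ℵ₁ : Cardinal.{u}).ord.ToType) := by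
    rwa [← le_def, mk_toType, card_ord]
  let G (o : (ℵ₁ : Cardinal.{u}).ord.ToType) := AddSubgroup.closure (φ ⁻¹' Iic o)
  have hG : Monotone G := fun o o' h =>
    AddSubgroup.closure_mono (preimage_mono (Iic_subset_Iic.2 h))
  obtain ⟨ρ, hρ⟩ := hG.exists_forall_mem_iff_le (G := fun o => (G o : Set V))
    fun x => ⟨φ x, AddSubgroup.subset_closure (mem_preimage.2 self_mem_Iic)⟩
  refine exists_coloring_of_rank hρ fun o => AddSubgroup.countable_closure ?_
  have hIio : #(Iio o) < ℵ₁ := by simpa using mk_Iio_lt o (by simp)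
  rw [← Iio_insert]
  exact ((le_aleph0_iff_set_countable.1 (lt_aleph_one_iff.1 hIio)).insert o).preimage φ.injective

theorem mk_fin_fun_real {k : ℕ} (hk : 1 ≤ k) : #(Fin k → ℝ) = 𝔠 := by
  rw [← power_def, mk_real, mk_fin, power_natCast, power_nat_eq aleph0_le_continuum hk]

theorem aleph_one_lt_mk_fin_fun_real_iff {k : ℕ} (hk : 1 ≤ k) :
    ℵ₁ < #(Fin k → ℝ) ↔ (ℵ₁ : Cardinal.{u}) < 2 ^ ℵ₀ := by
  rw [← lift_lt.{0, u}, mk_fin_fun_real hk, two_power_aleph0]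
  simp

/-- For `k ≥ 1`: `2^ℵ₀ > ℵ₁` iff every `ℵ₀`-coloring of `ℝ^k` admits four
pairwise distinct monochromatic vectors with `e1 + e2 = e3 + e4`. -/
theorem S_Rk_iff_not_CH (k : ℕ) (hk : 1 ≤ k) :
    Cardinal.aleph 1 < (2 : Cardinal) ^ Cardinal.aleph0 ↔
    ∀ COL : (Fin k → ℝ) → ℕ,
      ∃ e1 e2 e3 e4 : Fin k → ℝ,
        e1 ≠ e2 ∧ e1 ≠ e3 ∧ e1 ≠ e4 ∧ e2 ≠ e3 ∧ e2 ≠ e4 ∧ e3 ≠ e4 ∧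
        COL e1 = COL e2 ∧ COL e2 = COL e3 ∧ COL e3 = COL e4 ∧
        e1 + e2 = e3 + e4 := by
  rw [← aleph_one_lt_mk_fin_fun_real_iff hk]
  refine ⟨exists_isMonoAddQuadruple_of_aleph_one_lt_mk, fun h => ?_⟩
  by_contra hle
  obtain ⟨c, hc⟩ := exists_coloring_of_mk_le_aleph_one (not_lt.1 hle)
  obtain ⟨e1, e2, e3, e4, he⟩ := h c
  exact hc e1 e2 e3 e4 he
end

section
/- Fix integers k ≥ 1 and n ≥ 2, and let a1, ..., an be nonzero real numbers. Assume the Continuum Hypothesis (2^ℵ0 = ℵ1). Then there exists an ℵ0-coloring of ℝ^k such that there are no pairwise distinct vectors e1, ..., en ∈ ℝ^k of the same color satisfying a1·e1 + a2·e2 + ... + an·en = 0 (with scalar multiplication acting componentwise). -/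
/-!
This is the Erdős–Kakutani argument. The coefficients generate a countable subfield `F`, and
under CH the `F`-vector space `ℝ^k` has a basis indexed by a set of size at most `ℵ₁`, which
we order so that every initial segment is countable. Colour a nonzero vector by its leading basis
index `j` together with an injective code of it among the countably many vectors with leading
index `j`. Two vectors of one colour then have different leading indices, so every colour class
is `F`-linearly independent and carries no relation `∑ aᵢ eᵢ = 0` with `aᵢ ∈ F` nonzero.
-/

open Cardinal Set

universe u v

theorem Finsupp.countable_supported {α R : Type*} [Semiring R] [Countable R] {s : Set α}
    (hs : s.Countable) : (Finsupp.supported R R s : Set (α →₀ R)).Countable := by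
  have := hs.to_subtype
  exact countable_coe_iff.mp (Finsupp.supportedEquivFinsupp (M := R) (R := R) s).injective.countable

theorem Subfield.countable_closure {K : Type*} [DivisionRing K] {s : Set K} (hs : s.Countable) :
    Countable (Subfield.closure s) :=
  mk_le_aleph0_iff.mp <|
    (cardinalMk_closure_le_max s).trans (max_le (le_aleph0_iff_set_countable.mpr hs) le_rfl)

theorem Cardinal.continuum_eq_aleph_one_of_two_power_aleph0
    (ch : (2 : Cardinal.{u}) ^ ℵ₀ = ℵ₁) : (𝔠 : Cardinal.{v}) = ℵ₁ := by
  apply lift_injective.{u}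
  simpa [two_power_aleph0] using congrArg lift.{v} ch

theorem Cardinal.mk_fin_arrow_real_le_continuum (k : ℕ) : #(Fin k → ℝ) ≤ 𝔠 := by
  simpa [mk_arrow, mk_real] using power_nat_le aleph0_le_continuum

theorem Cardinal.exists_linearOrder_countable_Iic {α : Type*} (h : #α ≤ ℵ₁) :
    ∃ _ : LinearOrder α, ∀ j : α, (Iic j).Countable := by
  obtain ⟨f⟩ : Nonempty (α ↪ (ℵ₁ : Cardinal).ord.ToType) := by
    rwa [← le_def, mk_toType, card_ord]
  let := LinearOrder.lift' f f.injective
  refine ⟨this, fun j ↦ ?_⟩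
  have hIio : (Iio (f j)).Countable :=
    le_aleph0_iff_set_countable.mp <| lt_aleph_one_iff.mp <| by
      simpa using mk_Iio_lt (f j) (by simp)
  have hIic : (Iic (f j)).Countable := by
    rw [← Iio_insert]
    exact hIio.insert _
  exact hIic.preimage f.injective

namespace Module.Basis

variable {ι K V : Type*} [LinearOrder ι] [Field K] [AddCommGroup V] [Module K V]

noncomputable def leadingIndex (b : Basis ι K V) (v : V) : WithBot ι :=
  (b.repr v).support.max

variable (b : Basis ι K V)

theorem leadingIndex_eq_bot_iff {v : V} : b.leadingIndex v = ⊥ ↔ v = 0 := by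
  simp [leadingIndex, Finset.max_eq_bot]

theorem repr_leadingIndex_ne_zero {v : V} {j : ι} (h : b.leadingIndex v = j) :
    b.repr v j ≠ 0 :=
  Finsupp.mem_support_iff.mp (Finset.mem_of_max h)

theorem repr_eq_zero_of_leadingIndex_lt {v : V} {j : ι} (h : b.leadingIndex v < j) :
    b.repr v j = 0 :=
  Finsupp.notMem_support_iff.mp (Finset.notMem_of_max_lt_coe h)

theorem linearIndepOn_of_injOn_leadingIndex {s : Set V} (hs : 0 ∉ s)
    (hinj : InjOn b.leadingIndex s) : LinearIndepOn K id s := by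
  rw [linearIndepOn_iff]
  intro l hl hcomb
  by_contra hl0
  obtain ⟨v₀, hv₀, hmax⟩ := Finset.exists_max_image l.support b.leadingIndex
    (Finsupp.support_nonempty_iff.mpr hl0)
  have hv₀s : v₀ ∈ s := hl hv₀
  obtain ⟨j, hj⟩ := WithBot.ne_bot_iff_exists.mp
    (mt (b.leadingIndex_eq_bot_iff).mp (ne_of_mem_of_not_mem hv₀s hs))
  -- Evaluating the relation at the coordinate `j` kills every term but the one of `v₀`.
  have hcoord : l v₀ * b.repr v₀ j = 0 := by
    have := congrArg (fun w ↦ b.repr w j) hcomb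
    simp only [Finsupp.linearCombination_apply, Finsupp.sum, map_sum, map_smul,
      Finsupp.coe_finsetSum, Finset.sum_apply, Finsupp.smul_apply, smul_eq_mul, id, map_zero,
      Finsupp.coe_zero, Pi.zero_apply] at this
    rwa [Finset.sum_eq_single v₀ _ (fun h ↦ absurd hv₀ h)] at this
    intro v hv hvv₀
    have hlt : b.leadingIndex v < j := hj ▸ (hmax v hv).lt_of_ne
      (fun h ↦ hvv₀ (hinj (hl hv) hv₀s h))
    rw [b.repr_eq_zero_of_leadingIndex_lt hlt, mul_zero]
  exact mul_ne_zero (Finsupp.mem_support_iff.mp hv₀) (b.repr_leadingIndex_ne_zero hj.symm) hcoord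

theorem countable_setOf_leadingIndex_le [Countable K] (hι : ∀ j : ι, (Iic j).Countable)
    (j : WithBot ι) : {v : V | b.leadingIndex v ≤ j}.Countable := by
  have hT : {i : ι | (i : WithBot ι) ≤ j}.Countable := by
    cases j with
    | bot => simp
    | coe j => simpa [Iic] using hι j
  refine ((Finsupp.countable_supported hT).preimage b.repr.injective).mono fun v hv ↦ ?_
  rw [mem_preimage, SetLike.mem_coe, Finsupp.mem_supported]
  exact fun i hi ↦ (Finset.le_max hi).trans hv

theorem exists_coloring_linearIndepOn [Countable K] (b : Basis ι K V)
    (hι : ∀ j : ι, (Iic j).Countable) :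
    ∃ c : V → ℕ, ∀ m, LinearIndepOn K id {v | v ≠ 0 ∧ c v = m} := by
  have hfibre (j : WithBot ι) : ∃ g : V → ℕ, InjOn g {v | b.leadingIndex v = j} :=
    countable_iff_exists_injOn.mp <|
      (b.countable_setOf_leadingIndex_le hι j).mono fun _ hv ↦ le_of_eq hv
  choose g hg using hfibre
  refine ⟨fun v ↦ g (b.leadingIndex v) v,
    fun m ↦ b.linearIndepOn_of_injOn_leadingIndex (fun h ↦ h.1 rfl) ?_⟩
  rintro v ⟨-, hv⟩ w ⟨-, hw⟩ hvw
  refine hg _ hvw rfl ?_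
  calc g (b.leadingIndex w) v = g (b.leadingIndex v) v := by rw [hvw]
    _ = g (b.leadingIndex w) w := hv.trans hw.symm

end Module.Basis

theorem exists_coloring_linearIndepOn_of_rank_le_aleph_one {K V : Type*} [Field K] [Countable K]
    [AddCommGroup V] [Module K V] (h : Module.rank K V ≤ ℵ₁) :
    ∃ c : V → ℕ, ∀ m, LinearIndepOn K id {v | v ≠ 0 ∧ c v = m} := by
  let b := Module.Basis.ofVectorSpace K V
  obtain ⟨_, hι⟩ := exists_linearOrder_countable_Iic (b.mk_eq_rank''.trans_le h)
  exact b.exists_coloring_linearIndepOn hι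

theorem CH_implies_no_mono_solution_Rk_general (k n : ℕ) (hn : 2 ≤ n)
    (a : Fin n → ℝ) (ha : ∀ i, a i ≠ 0)
    (ch : (2 : Cardinal) ^ Cardinal.aleph0 = Cardinal.aleph 1) :
    ∃ COL : (Fin k → ℝ) → ℕ,
      ¬ ∃ e : Fin n → (Fin k → ℝ),
        Function.Injective e ∧
        (∀ i j, COL (e i) = COL (e j)) ∧
        ∑ i, a i • e i = 0 := by
  let F := Subfield.closure (range a)
  have : Countable F := Subfield.countable_closure (countable_range a)
  have hrank : Module.rank F (Fin k → ℝ) ≤ ℵ₁ :=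
    calc Module.rank F (Fin k → ℝ) ≤ #(Fin k → ℝ) := rank_le_card _ _
      _ ≤ 𝔠 := mk_fin_arrow_real_le_continuum k
      _ = ℵ₁ := continuum_eq_aleph_one_of_two_power_aleph0 ch
  obtain ⟨c, hc⟩ := exists_coloring_linearIndepOn_of_rank_le_aleph_one hrank
  refine ⟨fun v ↦ if v = 0 then 0 else c v + 1, ?_⟩
  rintro ⟨e, he, hmono, hsum⟩
  let i₀ : Fin n := ⟨0, by omega⟩
  have hne (i : Fin n) : e i ≠ 0 := by
    intro hi
    have hzero (j : Fin n) : e j = 0 := by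
      by_contra hj
      simpa [hi, hj] using hmono j i
    exact absurd (he ((hzero i₀).trans (hzero ⟨1, by omega⟩).symm)) (by simp [i₀])
  have hind : LinearIndependent F e := by
    refine (linearIndepOn_id_range_iff he).mp ((hc (c (e i₀))).mono ?_)
    rintro _ ⟨j, rfl⟩
    exact ⟨hne j, by simpa [hne] using hmono j i₀⟩
  have hcoeff := Fintype.linearIndependent_iff.mp hind
    (fun i ↦ ⟨a i, Subfield.subset_closure ⟨i, rfl⟩⟩) hsum i₀
  exact ha i₀ (congrArg Subtype.val hcoeff)

/-- Assuming CH, for `k ≥ 1`, `n ≥ 2` and nonzero reals `a 0, …, a (n-1)`, there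
is an `ℵ₀`-coloring of `ℝ^k` with no pairwise distinct monochromatic vectors
`e 0, …, e (n-1)` satisfying `∑ i, a i • e i = 0`. -/
theorem CH_implies_no_mono_solution_Rk (k n : ℕ) (hk : 1 ≤ k) (hn : 2 ≤ n)
    (a : Fin n → ℝ) (ha : ∀ i, a i ≠ 0)
    (ch : (2 : Cardinal) ^ Cardinal.aleph0 = Cardinal.aleph 1) :
    ∃ COL : (Fin k → ℝ) → ℕ,
      ¬ ∃ e : Fin n → (Fin k → ℝ),
        Function.Injective e ∧
        (∀ i j, COL (e i) = COL (e j)) ∧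
        ∑ i, a i • e i = 0 :=
  CH_implies_no_mono_solution_Rk_general k n hn a ha ch
end

section
/- Let n ≥ 1 and let b1, ..., bn be nonzero integers. The vector (b1, ..., bn) is regular if and only if some nonempty subset of {b1, ..., bn} sums to 0. -/
/-!
If a nonempty `S` has `∑_{i ∈ S} b i = 0`, pick `i₀ ∈ S` and put `A = ∑_{i ∉ S} b i`. A solution
is `e i₀ = z`, `e i = y` on `S \ {i₀}`, `e i = w` off `S`, as soon as `z - y = -A b i₀ t` and
`w = (b i₀)² t`. Monochromatic configurations `{x, x + C t, B t}` exist in every finite colouring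
(Brauer): induct on the number of colours, using a finitary Gallai theorem from Hales–Jewett.

Conversely, colour `x` by its last nonzero digit in base `p`, for a prime `p > ∑ |b i|`. In a
monochromatic solution, reducing `∑ b i e i / p^m = 0` modulo `p`, where `m` is the least
`p`-adic valuation of the `e i`, shows that the `i` of valuation `m` form a set `T` with
`p ∣ ∑_{i ∈ T} b i`, hence `∑_{i ∈ T} b i = 0`.
-/
open Combinatorics Finset

theorem exists_bound_mono_homothetic_copy {κ : Type*} [Finite κ] (S : Finset ℕ) :
    ∃ N, ∀ χ : ℕ → κ, ∃ a y k, 0 < a ∧ a ≤ N ∧ y ≤ N ∧ ∀ s ∈ S, χ (a * s + y) = k := by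
  classical
  obtain ⟨ι, _, hι⟩ := Line.exists_mono_in_high_dimension S κ
  refine ⟨Fintype.card ι * (S.sup id + 1), fun χ => ?_⟩
  obtain ⟨l, k, hl⟩ := hι fun v => χ (∑ i, (v i : ℕ))
  set A : Finset ι := {i | l.idxFun i = none}
  set y := ∑ i, ((l.idxFun i).map Subtype.val).getD 0
  have hcoord : ∀ (x : S) i, (l x i : ℕ) =
      (if l.idxFun i = none then (x : ℕ) else 0) + ((l.idxFun i).map Subtype.val).getD 0 := by
    intro x i
    rw [Line.coe_apply]
    cases l.idxFun i <;> simp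
  have hline : ∀ x : S, ∑ i, (l x i : ℕ) = #A * x + y := by
    intro x
    simp only [hcoord, sum_add_distrib, ← sum_filter, sum_const, smul_eq_mul, A, y]
  have hy : y ≤ Fintype.card ι * S.sup id := by
    calc y ≤ ∑ _i : ι, S.sup id := by
          refine sum_le_sum fun i _ => ?_
          cases l.idxFun i with
          | none => simp
          | some s => simpa using le_sup (f := id) s.2
      _ = Fintype.card ι * S.sup id := by simp
  have hA : #A ≤ Fintype.card ι := card_le_univ A
  refine ⟨#A, y, k, card_pos.2 ⟨_, by simpa [A] using l.proper.choose_spec⟩, by nlinarith,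
    by nlinarith, fun s hs => ?_⟩
  rw [← hline ⟨s, hs⟩]
  exact hl ⟨s, hs⟩

theorem exists_bound_brauer_triple {κ : Type*} [Finite κ] {B : ℕ} (hB : 0 < B) (C c : ℕ) :
    ∃ N, ∀ K : Finset κ, #K ≤ c → ∀ χ : ℕ → κ, (∀ m ∈ Icc 1 N, χ m ∈ K) →
      ∃ x t, 0 < x ∧ 0 < t ∧ x + C * t ≤ N ∧ B * t ≤ N ∧
        χ (x + C * t) = χ x ∧ χ (B * t) = χ x := by
  classical
  induction c with
  | zero =>
    refine ⟨1, fun K hK χ hχ => ?_⟩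
    have := hχ 1 (by simp)
    simp_all
  | succ c ih =>
    obtain ⟨J, hJ⟩ := ih
    obtain ⟨M, hM⟩ := exists_bound_mono_homothetic_copy (κ := κ) (range (C * J + 2))
    set N := M * (C * J + B * J + 2)
    refine ⟨N, fun K hK χ hχ => ?_⟩
    obtain ⟨a, y, k, ha, haM, hyM, hk⟩ := hM χ
    have hle : ∀ u ≤ C * J + B * J + 1, a * u + y ≤ N := fun u hu =>
      calc a * u + y ≤ M * u + M := add_le_add (Nat.mul_le_mul_right _ haM) hyM
        _ = M * (u + 1) := by ring
        _ ≤ N := Nat.mul_le_mul_left _ (by omega)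
    have hprog : ∀ j ≤ J, χ (a + y + C * (a * j)) = k := fun j hj => by
      have : C * j ≤ C * J := Nat.mul_le_mul_left C hj
      convert hk (1 + C * j) (mem_range.2 (by omega)) using 2
      ring
    have hB_le : ∀ j ≤ J, B * (a * j) ≤ N := fun j hj => by
      have : B * j ≤ B * J := Nat.mul_le_mul_left B hj
      calc B * (a * j) ≤ a * (B * j) + y := by rw [mul_left_comm]; omega
        _ ≤ N := hle _ (by omega)
    have hk_eq : χ (a + y) = k := by simpa using hprog 0 (Nat.zero_le _)
    -- Either some `B a j` continues the progression's colour `k`, or `j ↦ χ (B a j)` avoids `k`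
    -- on `[1, J]` and the induction hypothesis applies to it.
    by_cases hcase : ∃ j ∈ Icc 1 J, χ (B * (a * j)) = k
    · obtain ⟨j, hj, hjk⟩ := hcase
      rw [mem_Icc] at hj
      have : C * j ≤ C * J := Nat.mul_le_mul_left C hj.2
      refine ⟨a + y, a * j, by omega, Nat.mul_pos ha hj.1, ?_, hB_le j hj.2, ?_, ?_⟩
      · calc a + y + C * (a * j) = a * (1 + C * j) + y := by ring
          _ ≤ N := hle _ (by omega)
      · rw [hprog j hj.2, hk_eq]
      · rw [hjk, hk_eq]
    · push Not at hcase
      have hkK : k ∈ K := hk_eq ▸ hχ _ (mem_Icc.2 ⟨by omega, by simpa using hle 1 (by omega)⟩)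
      have hrecolour : ∀ j ∈ Icc 1 J, χ (B * (a * j)) ∈ K.erase k := fun j hj => by
        rw [mem_Icc] at hj
        exact mem_erase.2 ⟨hcase j (mem_Icc.2 hj),
          hχ _ (mem_Icc.2 ⟨Nat.mul_pos hB (Nat.mul_pos ha hj.1), hB_le j hj.2⟩)⟩
      obtain ⟨x, t, hx, ht, hxt, hBt, h₁, h₂⟩ :=
        hJ (K.erase k) (by rw [card_erase_of_mem hkK]; omega) _ hrecolour
      refine ⟨B * (a * x), B * (a * t), by positivity, by positivity, ?_, ?_, ?_, ?_⟩
      · calc _ = B * (a * (x + C * t)) := by ring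
          _ ≤ N := hB_le _ hxt
      · calc _ = B * (a * (B * t)) := by ring
          _ ≤ N := hB_le _ hBt
      · convert h₁ using 2
        ring
      · convert h₂ using 2
        ring

theorem exists_mono_sub_eq_mul {κ : Type*} [Finite κ] {B : ℕ} (hB : 0 < B) (D : ℤ)
    (χ : ℕ → κ) :
    ∃ y z t : ℕ, 0 < y ∧ 0 < z ∧ 0 < t ∧ (z : ℤ) - y = D * t ∧
      χ z = χ y ∧ χ (B * t) = χ y := by
  classical
  cases nonempty_fintype κ
  obtain ⟨N, hN⟩ := exists_bound_brauer_triple (κ := κ) hB D.natAbs (Fintype.card κ)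
  obtain ⟨x, t, hx, ht, -, -, h₁, h₂⟩ := hN univ card_univ.le χ fun _ _ => mem_univ _
  have hcast : ((x + D.natAbs * t : ℕ) : ℤ) = x + |D| * t := by push_cast; rfl
  rcases abs_choice D with hD | hD
  · exact ⟨x, _, t, hx, by omega, ht, by rw [hcast, hD]; ring, h₁, h₂⟩
  · exact ⟨_, x, t, by omega, hx, ht, by rw [hcast, hD]; ring, h₁.symm, h₂.trans h₁.symm⟩

theorem exists_mono_solution_of_sum_eq_zero {ι κ : Type*} [Fintype ι] [Finite κ] {b : ι → ℤ}
    {S : Finset ι} {i₀ : ι} (hi₀ : i₀ ∈ S) (hb : b i₀ ≠ 0) (hS : ∑ i ∈ S, b i = 0)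
    (χ : ℕ → κ) :
    ∃ v : ι → ℕ, (∀ i, 0 < v i) ∧ (∀ i j, χ (v i) = χ (v j)) ∧ ∑ i, b i * v i = 0 := by
  classical
  set A := ∑ i ∈ Sᶜ, b i
  obtain ⟨y, z, t, hy, hz, ht, hzy, hχz, hχB⟩ :=
    exists_mono_sub_eq_mul (pow_pos (Int.natAbs_pos.2 hb) 2) (-(A * b i₀)) χ
  set v : ι → ℕ := fun i => if i ∈ S then (if i = i₀ then z else y) else (b i₀).natAbs ^ 2 * t
  have hv : ∀ i, 0 < v i ∧ χ (v i) = χ y := fun i => by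
    by_cases hiS : i ∈ S <;> by_cases hi : i = i₀ <;>
      simp [v, hiS, hi, hi₀, hy, hz, ht, hb, hχz, hχB]
  have hvS : ∀ i ∈ S, b i * (v i : ℤ) = b i * y + if i = i₀ then b i₀ * (z - y) else 0 :=
    fun i hi => by by_cases h : i = i₀ <;> simp [v, hi, h, hi₀]; ring
  have hvSc : ∀ i ∈ Sᶜ, b i * (v i : ℤ) = b i * (b i₀ ^ 2 * t) := fun i hi => by
    simp [v, mem_compl.1 hi]
  refine ⟨v, fun i => (hv i).1, fun i j => (hv i).2.trans (hv j).2.symm, ?_⟩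
  calc ∑ i, b i * v i = ∑ i ∈ S, b i * v i + ∑ i ∈ Sᶜ, b i * v i := (sum_add_sum_compl S _).symm
    _ = (∑ i ∈ S, b i) * y + b i₀ * (z - y) + A * (b i₀ ^ 2 * t) := by
      rw [sum_congr rfl hvS, sum_congr rfl hvSc, sum_add_distrib, sum_ite_eq', if_pos hi₀,
        ← sum_mul, ← sum_mul]
    _ = 0 := by rw [hS, hzy]; ring

theorem exists_subset_sum_dvd_of_ordCompl_modEq {ι : Type*} [Fintype ι] [Nonempty ι] {p : ℕ}
    (hp : p.Prime) (b : ι → ℤ) {e : ι → ℕ} (he : ∀ i, e i ≠ 0)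
    (hcol : ∀ i j, ordCompl[p] (e i) ≡ ordCompl[p] (e j) [MOD p])
    (hsum : ∑ i, b i * e i = 0) :
    ∃ T : Finset ι, T.Nonempty ∧ (p : ℤ) ∣ ∑ i ∈ T, b i := by
  classical
  have : Fact p.Prime := ⟨hp⟩
  obtain ⟨i₀, hmin⟩ := Finite.exists_min fun i => (e i).factorization p
  set m := (e i₀).factorization p
  have hdvd : ∀ i, p ^ m ∣ e i := fun i => (hp.pow_dvd_iff_le_factorization (he i)).2 (hmin i)
  set f : ι → ℕ := fun i => e i / p ^ m
  have hef : ∀ i, e i = p ^ m * f i := fun i => (Nat.mul_div_cancel' (hdvd i)).symm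
  have hfsum : ∑ i, b i * f i = 0 := by
    have hpm : (p : ℤ) ^ m ≠ 0 := pow_ne_zero _ (by exact_mod_cast hp.ne_zero)
    refine (mul_eq_zero.1 ?_).resolve_left hpm
    rw [mul_sum, ← hsum]
    exact sum_congr rfl fun i _ => by rw [hef i]; push_cast; ring
  set d : ZMod p := ((ordCompl[p] (e i₀) : ℕ) : ZMod p)
  have hd : d ≠ 0 := by
    rw [Ne, ZMod.natCast_eq_zero_iff]
    exact Nat.not_dvd_ordCompl hp (he i₀)
  have hfd : ∀ i, (f i : ZMod p) = if ¬ p ∣ f i then d else 0 := fun i => by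
    by_cases hi : p ∣ f i
    · rw [if_neg (not_not.2 hi), ZMod.natCast_eq_zero_iff]
      exact hi
    · have : f i = ordCompl[p] (e i) := by
        rw [hef i, Nat.ordCompl_self_pow_mul _ _ hp, Nat.factorization_eq_zero_of_not_dvd hi,
          pow_zero, Nat.div_one]
      rw [if_pos hi, this]
      exact (ZMod.natCast_eq_natCast_iff _ _ _).2 (hcol i i₀)
  have hi₀ : ¬ p ∣ f i₀ := Nat.not_dvd_ordCompl hp (he i₀)
  refine ⟨({i | ¬ p ∣ f i} : Finset ι), ⟨i₀, by simpa using hi₀⟩, ?_⟩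
  rw [← ZMod.intCast_zmod_eq_zero_iff_dvd]
  have := congrArg (Int.cast : ℤ → ZMod p) hfsum
  push_cast at this ⊢
  simp only [hfd, mul_ite, mul_zero, ← sum_filter, ← sum_mul] at this
  exact (mul_eq_zero.1 this).resolve_right hd

/-- Rado's theorem for a single equation: a vector `b` of nonzero integers is
regular iff some nonempty subset of its entries sums to `0`. -/
theorem rado_single_equation (n : ℕ) (hn : 1 ≤ n) (b : Fin n → ℤ)
    (hb : ∀ i, b i ≠ 0) :
    (∀ c : ℕ, ∀ COL : ℕ+ → Fin c,
      ∃ e : Fin n → ℕ+,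
        (∀ i j, COL (e i) = COL (e j)) ∧
        ∑ i, b i * (e i : ℤ) = 0) ↔
    ∃ S : Finset (Fin n), S.Nonempty ∧ ∑ i ∈ S, b i = 0 := by
  constructor
  · intro hreg
    have : Nonempty (Fin n) := ⟨⟨0, hn⟩⟩
    obtain ⟨p, hbp, hp⟩ := Nat.exists_infinite_primes (∑ i, (b i).natAbs + 1)
    obtain ⟨e, hcol, hsum⟩ := hreg p fun x => ⟨ordCompl[p] x % p, Nat.mod_lt _ hp.pos⟩
    obtain ⟨T, hT, hpT⟩ := exists_subset_sum_dvd_of_ordCompl_modEq hp b (fun i => (e i).ne_zero)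
      (fun i j => Fin.val_eq_of_eq (hcol i j)) hsum
    refine ⟨T, hT, Int.eq_zero_of_dvd_of_natAbs_lt_natAbs hpT ?_⟩
    calc (∑ i ∈ T, b i).natAbs ≤ ∑ i ∈ T, (b i).natAbs := Int.natAbs_sum_le _ _
      _ ≤ ∑ i, (b i).natAbs := sum_le_sum_of_subset (subset_univ T)
      _ < p := hbp
  · rintro ⟨S, ⟨i₀, hi₀⟩, hS⟩ c COL
    obtain ⟨v, hv, hmono, hsum⟩ :=
      exists_mono_solution_of_sum_eq_zero hi₀ (hb i₀) hS fun m => COL m.toPNat'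
    refine ⟨fun i => (v i).toPNat', hmono, ?_⟩
    simpa [Nat.toPNat'_coe, hv] using hsum
end

section
/- Let F be any field and let γ ∈ F with γ ≠ 0 and γ ≠ 1. Then there exists an ℵ0-coloring of F such that there are no pairwise distinct x, y, z ∈ F of the same color satisfying z − x = γ·(y − x). -/
open Finsupp

section Aux

variable {K : Type*} [Field K] {ι : Type*} [LinearOrder ι]

/-- The list of nonzero values of a finitely supported function, in increasing
order of the index. -/
noncomputable def clist (a : ι →₀ K) : List K :=
  if h : a.support.Nonempty then
    a (a.support.min' h) :: clist (a.erase (a.support.min' h))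
  else []
termination_by a.support.card
decreasing_by
  simp only [Finsupp.support_erase]
  exact Finset.card_erase_lt_of_mem (a.support.min'_mem h)

lemma clist_cons (a : ι →₀ K) (h : a.support.Nonempty) :
    clist a = a (a.support.min' h) :: clist (a.erase (a.support.min' h)) := by
  rw [clist, dif_pos h]

lemma clist_nil (a : ι →₀ K) (h : ¬ a.support.Nonempty) : clist a = [] := by
  rw [clist, dif_neg h]

lemma ceder_key {γ : K} (h0 : γ ≠ 0) (h1 : γ ≠ 1) :
    ∀ n (a b c : ι →₀ K), (a.support ∪ b.support ∪ c.support).card ≤ n →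
      clist a = clist b → clist b = clist c →
      (∀ i, c i = (1 - γ) * a i + γ * b i) →
      a = b ∧ b = c := by
  have h1' : (1 : K) - γ ≠ 0 := sub_ne_zero.mpr (Ne.symm h1)
  intro n
  induction n with
  | zero =>
    intro a b c hcard _ _ _
    have hU : a.support ∪ b.support ∪ c.support = ∅ := Finset.card_eq_zero.mp (Nat.le_zero.mp hcard)
    have ha : a.support = ∅ := by
      have := Finset.union_eq_empty.mp hU
      exact (Finset.union_eq_empty.mp this.1).1
    have hb : b.support = ∅ := by
      have := Finset.union_eq_empty.mp hU
      exact (Finset.union_eq_empty.mp this.1).2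
    have hc : c.support = ∅ := (Finset.union_eq_empty.mp hU).2
    rw [Finsupp.support_eq_empty] at ha hb hc
    exact ⟨ha.trans hb.symm, hb.trans hc.symm⟩
  | succ n ih =>
    intro a b c hcard hab hbc hrel
    by_cases hU : (a.support ∪ b.support ∪ c.support).Nonempty
    · set U := a.support ∪ b.support ∪ c.support with hUdef
      set m := U.min' hU with hm
      -- generic fact: if m is in a support, it is its min'
      have minof : ∀ (d : ι →₀ K) (hd : d.support ⊆ U) (hmem : m ∈ d.support),
          d.support.min' ⟨m, hmem⟩ = m := by
        intro d hd hmem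
        exact le_antisymm (d.support.min'_le m hmem)
          (U.min'_le _ (hd (d.support.min'_mem ⟨m, hmem⟩)))
      have hsa : a.support ⊆ U := (Finset.subset_union_left).trans Finset.subset_union_left
      have hsb : b.support ⊆ U := (Finset.subset_union_right).trans Finset.subset_union_left
      have hsc : c.support ⊆ U := Finset.subset_union_right
      -- head fact
      have headof : ∀ (d : ι →₀ K) (hd : d.support ⊆ U) (hmem : m ∈ d.support),
          (clist d).head? = some (d m) := by
        intro d hd hmem
        rw [clist_cons d ⟨m, hmem⟩, minof d hd hmem, List.head?_cons]
      -- Step 1 : a m ≠ 0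
      have ham : a m ≠ 0 := by
        intro haz
        have hc_eq : c m = γ * b m := by rw [hrel m, haz, mul_zero, zero_add]
        by_cases hbz : b m = 0
        · have hcz : c m = 0 := by rw [hc_eq, hbz, mul_zero]
          rcases Finset.mem_union.mp (U.min'_mem hU) with h | h
          · rcases Finset.mem_union.mp h with h | h
            · exact (Finsupp.mem_support_iff.mp h) haz
            · exact (Finsupp.mem_support_iff.mp h) hbz
          · exact (Finsupp.mem_support_iff.mp h) hcz
        · have hmb : m ∈ b.support := Finsupp.mem_support_iff.mpr hbz
          have hcz : c m ≠ 0 := by rw [hc_eq]; exact mul_ne_zero h0 hbz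
          have hmc : m ∈ c.support := Finsupp.mem_support_iff.mpr hcz
          have := (headof b hsb hmb).symm.trans ((congrArg List.head? hbc).trans (headof c hsc hmc))
          have hbm : b m = c m := Option.some.inj this
          rw [hc_eq] at hbm
          have : (1 - γ) * b m = 0 := by ring_nf; linear_combination hbm
          exact hbz (by
            rcases mul_eq_zero.mp this with h | h
            · exact absurd h h1'
            · exact h)
      have hma : m ∈ a.support := Finsupp.mem_support_iff.mpr ham
      -- Step 2 : b m ≠ 0
      have hbm : b m ≠ 0 := by
        intro hbz
        have hc_eq : c m = (1 - γ) * a m := by rw [hrel m, hbz, mul_zero, add_zero]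
        have hcz : c m ≠ 0 := by rw [hc_eq]; exact mul_ne_zero h1' ham
        have hmc : m ∈ c.support := Finsupp.mem_support_iff.mpr hcz
        have := (headof a hsa hma).symm.trans
          ((congrArg List.head? (hab.trans hbc)).trans (headof c hsc hmc))
        have ham' : a m = c m := Option.some.inj this
        rw [hc_eq] at ham'
        have : γ * a m = 0 := by linear_combination ham'
        rcases mul_eq_zero.mp this with h | h
        · exact h0 h
        · exact ham h
      have hmb : m ∈ b.support := Finsupp.mem_support_iff.mpr hbm
      -- Step 3 : a m = b m, c m = a m
      have habm : a m = b m := by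
        have := (headof a hsa hma).symm.trans ((congrArg List.head? hab).trans (headof b hsb hmb))
        exact Option.some.inj this
      have hcm : c m = a m := by rw [hrel m, ← habm]; ring
      have hmc : m ∈ c.support := Finsupp.mem_support_iff.mpr (hcm ▸ ham)
      -- erase m
      have hta : clist a = a m :: clist (a.erase m) := by
        rw [clist_cons a ⟨m, hma⟩, minof a hsa hma]
      have htb : clist b = b m :: clist (b.erase m) := by
        rw [clist_cons b ⟨m, hmb⟩, minof b hsb hmb]
      have htc : clist c = c m :: clist (c.erase m) := by
        rw [clist_cons c ⟨m, hmc⟩, minof c hsc hmc]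
      rw [hta, htb] at hab
      rw [htb, htc] at hbc
      have hab' := List.tail_eq_of_cons_eq hab
      have hbc' := List.tail_eq_of_cons_eq hbc
      -- relation for erased versions
      have hrel' : ∀ i, (c.erase m) i = (1 - γ) * (a.erase m) i + γ * (b.erase m) i := by
        intro i
        by_cases hi : i = m
        · subst hi
          simp [Finsupp.erase_same]
        · rw [Finsupp.erase_ne hi, Finsupp.erase_ne hi, Finsupp.erase_ne hi]
          exact hrel i
      -- cardinality
      have hcard' : ((a.erase m).support ∪ (b.erase m).support ∪ (c.erase m).support).card ≤ n := by
        have : (a.erase m).support ∪ (b.erase m).support ∪ (c.erase m).support = U.erase m := by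
          simp only [Finsupp.support_erase, hUdef]
          rw [← Finset.erase_union_distrib, ← Finset.erase_union_distrib]
        rw [this, Finset.card_erase_of_mem (U.min'_mem hU)]
        omega
      obtain ⟨e1, e2⟩ := ih (a.erase m) (b.erase m) (c.erase m) hcard' hab' hbc' hrel'
      constructor
      · ext i
        by_cases hi : i = m
        · subst hi; exact habm
        · rw [← Finsupp.erase_ne (f := a) hi, ← Finsupp.erase_ne (f := b) hi, e1]
      · ext i
        by_cases hi : i = m
        · subst hi; rw [hcm, habm]
        · rw [← Finsupp.erase_ne (f := b) hi, ← Finsupp.erase_ne (f := c) hi, e2]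
    · -- union empty
      rw [Finset.not_nonempty_iff_eq_empty] at hU
      have ha : a.support = ∅ := (Finset.union_eq_empty.mp (Finset.union_eq_empty.mp hU).1).1
      have hb : b.support = ∅ := (Finset.union_eq_empty.mp (Finset.union_eq_empty.mp hU).1).2
      have hc : c.support = ∅ := (Finset.union_eq_empty.mp hU).2
      rw [Finsupp.support_eq_empty] at ha hb hc
      exact ⟨ha.trans hb.symm, hb.trans hc.symm⟩

end Aux

/-- Ceder's theorem: for any field `F` and `γ ∈ F \ {0, 1}`, there is an
`ℵ₀`-coloring of `F` with no pairwise distinct monochromatic `x, y, z`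
satisfying `z - x = γ * (y - x)`. -/
theorem ceder (F : Type*) [Field F] (γ : F) (h0 : γ ≠ 0) (h1 : γ ≠ 1) :
    ∃ COL : F → ℕ,
      ¬ ∃ x y z : F,
        x ≠ y ∧ x ≠ z ∧ y ≠ z ∧
        COL x = COL y ∧ COL y = COL z ∧
        z - x = γ * (y - x) := by
  classical
  set K := Subfield.closure ({γ} : Set F) with hK
  have hKc : Countable K :=
    Cardinal.mk_le_aleph0_iff.mp
      ((Subfield.cardinalMk_closure_le_max _).trans (max_le Cardinal.mk_le_aleph0 le_rfl))
  letI : LinearOrder (Module.Basis.ofVectorSpaceIndex K F) := IsWellOrder.linearOrder WellOrderingRel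
  have hKcl : Countable (List K) := inferInstance
  obtain ⟨f, hf⟩ := Countable.exists_injective_nat (List K)
  let b := Module.Basis.ofVectorSpace K F
  refine ⟨fun x => f (clist (b.repr x)), ?_⟩
  rintro ⟨x, y, z, hxy, _, _, e1, e2, rel⟩
  have hγ : γ ∈ K := Subfield.subset_closure rfl
  set γK : K := ⟨γ, hγ⟩ with hγK
  have h0' : γK ≠ 0 := fun h => h0 (congrArg Subtype.val h)
  have h1' : γK ≠ 1 := fun h => h1 (congrArg Subtype.val h)
  have hz : z = (1 - γK) • x + γK • y := by
    have : ((1 - γK) • x : F) = (1 - γ) * x := rfl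
    rw [this]
    have : (γK • y : F) = γ * y := rfl
    rw [this]
    have : z = x + (γ * (y - x)) := by rw [← rel]; ring
    rw [this]; ring
  have hrel : ∀ i, b.repr z i = (1 - γK) * b.repr x i + γK * b.repr y i := by
    intro i
    rw [hz, map_add, map_smul, map_smul, Finsupp.add_apply, Finsupp.smul_apply,
      Finsupp.smul_apply, smul_eq_mul, smul_eq_mul]
  have hab : clist (b.repr x) = clist (b.repr y) := hf e1
  have hbc : clist (b.repr y) = clist (b.repr z) := hf e2
  obtain ⟨exy, _⟩ := ceder_key h0' h1' _ (b.repr x) (b.repr y) (b.repr z) le_rfl hab hbc hrel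
  exact hxy (b.repr.injective exy)
end

section
/- Let F be any field and let b1, b2, b3 ∈ F, not all zero, with b1 + b2 + b3 = 0. Then (b1, b2, b3) is not ℵ0-distinct-regular over F; that is, there exists an ℵ0-coloring of F such that there are no pairwise distinct e1, e2, e3 ∈ F of the same color satisfying b1·e1 + b2·e2 + b3·e3 = 0. -/
/-!
Pass to a countable subfield `K ∋ c` with `c = -b2 / b1`, fix a linear order on a `K`-basis of `F`,
and colour a vector by the list of its nonzero coordinates in increasing order of basis index
(countably many colours). Suppose `x, y, z` have the same colour and `x - z = c • (y - z)`, and let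
`m` be the least index in the support of `d = y - z`. Below `m` the three vectors agree, so their
lists share the prefix coming from there; the next entry of each list is its coordinate at `m`
whenever that is nonzero. These coordinates `z m, z m + d m, z m + c * d m` are pairwise distinct,
so two of them are nonzero and different, and the lists differ.
-/

theorem Finset.sort_eq_filter_lt_append {α : Type*} [LinearOrder α] {s : Finset α} {m : α}
    (hm : m ∈ s) :
    s.sort = (s.filter (· < m)).sort ++ m :: (s.filter (m < ·)).sort := by
  refine s.sortedLT_sort.pairwise.eq_of_mem_iff ?_ fun a => ?_
  · simp only [List.pairwise_append, List.pairwise_cons, List.mem_cons, Finset.mem_sort,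
      Finset.mem_filter, (Finset.sortedLT_sort _).pairwise]
    grind
  · simp only [List.mem_append, List.mem_cons, Finset.mem_sort, Finset.mem_filter]
    grind

namespace Finsupp

variable {ι K : Type*} [LinearOrder ι]

section Zero

variable [Zero K]

def coeffList (f : ι →₀ K) : List K :=
  f.support.sort.map f

theorem coeffList_eq_append {f : ι →₀ K} {m : ι} (hm : f m ≠ 0) :
    f.coeffList = (f.filter (· < m)).coeffList ++ f m :: (f.filter (m < ·)).coeffList := by
  have hfilter (p : ι → Prop) [DecidablePred p] :
      (f.filter p).coeffList = (f.support.filter p).sort.map f :=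
    List.map_congr_left fun i hi =>
      filter_apply_pos _ _ (Finset.mem_filter.1 ((Finset.mem_sort _).1 hi)).2
  rw [hfilter, hfilter, coeffList, Finset.sort_eq_filter_lt_append (mem_support_iff.2 hm),
    List.map_append, List.map_cons]

theorem apply_eq_of_coeffList_eq {f f' : ι →₀ K} {m : ι} (hf : f m ≠ 0) (hf' : f' m ≠ 0)
    (hlow : f.filter (· < m) = f'.filter (· < m)) (h : f.coeffList = f'.coeffList) :
    f m = f' m := by
  rw [coeffList_eq_append hf, coeffList_eq_append hf', hlow] at h
  exact (List.cons.inj (List.append_cancel_left h)).1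

end Zero

variable [Ring K] [NoZeroDivisors K]

theorem not_coeffList_eq_of_progression {c : K} (hc₀ : c ≠ 0) (hc₁ : c ≠ 1) {g d : ι →₀ K}
    (hd : d ≠ 0) :
    ¬ ((g + c • d).coeffList = (g + d).coeffList ∧ (g + d).coeffList = g.coeffList) := by
  rintro ⟨h₁, h₂⟩
  set m := d.support.min' (support_nonempty_iff.2 hd)
  have hdm : d m ≠ 0 := mem_support_iff.1 (d.support.min'_mem _)
  have hlow (a : K) : (g + a • d).filter (· < m) = g.filter (· < m) := by
    have : d.filter (· < m) = 0 :=
      (filter_eq_zero_iff _ _).2 fun i hi =>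
        notMem_support_iff.1 fun h => (d.support.min'_le i h).not_gt hi
    rw [filter_add, filter_smul, this, smul_zero, add_zero]
  have hpair {u v : ι →₀ K} (h : u.coeffList = v.coeffList)
      (hl : u.filter (· < m) = v.filter (· < m)) (huv : u m ≠ v m) : u m = 0 ∨ v m = 0 := by
    by_contra! h'
    exact huv (apply_eq_of_coeffList_eq h'.1 h'.2 hl h)
  have hcd : c * d m ≠ d m := fun h => hc₁ (mul_right_cancel₀ hdm (h.trans (one_mul _).symm))
  have h₁₂ := hpair h₁ ((hlow c).trans (by simpa using (hlow 1).symm)) (by simpa using hcd)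
  have h₁₃ := hpair (h₁.trans h₂) (hlow c) (by simpa using mul_ne_zero hc₀ hdm)
  have h₂₃ := hpair h₂ (by simpa using hlow 1) (by simpa using hdm)
  simp only [add_apply, smul_apply, smul_eq_mul] at h₁₂ h₁₃ h₂₃
  rcases h₂₃ with h | h
  · rcases h₁₃ with h' | h'
    · exact hcd (add_left_cancel (h'.trans h.symm))
    · exact hdm (by simpa [h'] using h)
  · rcases h₁₂ with h' | h'
    · exact mul_ne_zero hc₀ hdm (by simpa [h] using h')
    · exact hdm (by simpa [h] using h')

end Finsupp

theorem Module.Free.exists_nat_coloring_no_progression (K V : Type*) [Ring K] [NoZeroDivisors K]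
    [Countable K] [AddCommGroup V] [Module K V] [Module.Free K V] :
    ∃ col : V → ℕ, ∀ (c : K) (x y z : V), col x = col y → col y = col z →
      x - z = c • (y - z) → x = y ∨ x = z := by
  let b := Module.Free.chooseBasis K V
  let : LinearOrder (Module.Free.ChooseBasisIndex K V) := IsWellOrder.linearOrder WellOrderingRel
  obtain ⟨enc, henc⟩ := exists_injective_nat (List K)
  refine ⟨fun v => enc (b.repr v).coeffList, fun c x y z hxy hyz hrel => ?_⟩
  by_contra! hne
  have hd : y - z ≠ 0 := fun h => hne.2 (sub_eq_zero.1 (by simpa [h] using hrel))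
  have hc₀ : c ≠ 0 := fun h => hne.2 (by simpa [h, sub_eq_zero] using hrel)
  have hc₁ : c ≠ 1 := fun h => hne.1 (by simpa [h] using hrel)
  have hx : x = z + c • (y - z) := by rw [← hrel, add_sub_cancel]
  have hy : y = z + (y - z) := (add_sub_cancel z y).symm
  refine Finsupp.not_coeffList_eq_of_progression hc₀ hc₁ (g := b.repr z)
    ((b.repr.map_ne_zero_iff).2 hd) ⟨?_, ?_⟩
  · rw [← map_smul, ← map_add, ← map_add, ← hx, ← hy]
    exact henc hxy
  · rw [← map_add, ← hy]
    exact henc hyz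

theorem exists_nat_coloring_no_progression (F : Type*) [Field F] (c : F) :
    ∃ col : F → ℕ, ∀ x y z : F, col x = col y → col y = col z →
      x - z = c * (y - z) → x = y ∨ x = z := by
  let K := Subfield.closure ({c} : Set F)
  have : Countable K := by
    rw [← Cardinal.mk_le_aleph0_iff]
    refine (Subfield.cardinalMk_closure_le_max _).trans ?_
    simp
  obtain ⟨col, hcol⟩ := Module.Free.exists_nat_coloring_no_progression K F
  exact ⟨col, fun x y z => hcol ⟨c, Subfield.subset_closure rfl⟩ x y z⟩

/-- For any field `F` and `b1, b2, b3 ∈ F`, not all zero, with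
`b1 + b2 + b3 = 0`, the triple `(b1, b2, b3)` is not `ℵ₀`-distinct-regular
over `F`. -/
theorem not_aleph0_distinct_regular (F : Type*) [Field F] (b1 b2 b3 : F)
    (hb : ¬ (b1 = 0 ∧ b2 = 0 ∧ b3 = 0)) (hsum : b1 + b2 + b3 = 0) :
    ∃ COL : F → ℕ,
      ¬ ∃ e1 e2 e3 : F,
        e1 ≠ e2 ∧ e1 ≠ e3 ∧ e2 ≠ e3 ∧
        COL e1 = COL e2 ∧ COL e2 = COL e3 ∧
        b1 * e1 + b2 * e2 + b3 * e3 = 0 := by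
  have hb₁₂ : b1 ≠ 0 ∨ b2 ≠ 0 := by
    by_contra! h
    exact hb ⟨h.1, h.2, by linear_combination hsum - h.1 - h.2⟩
  -- using `hsum`, the equation reads `b1 * (e1 - e3) + b2 * (e2 - e3) = 0`
  rcases hb₁₂ with h₁ | h₂
  · obtain ⟨col, hcol⟩ := exists_nat_coloring_no_progression F (-b2 / b1)
    refine ⟨col, ?_⟩
    rintro ⟨e1, e2, e3, h12, h13, -, hc12, hc23, heq⟩
    have hrel : e1 - e3 = -b2 / b1 * (e2 - e3) := by
      field_simp
      linear_combination heq - e3 * hsum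
    exact (hcol e1 e2 e3 hc12 hc23 hrel).elim h12 h13
  · obtain ⟨col, hcol⟩ := exists_nat_coloring_no_progression F (-b1 / b2)
    refine ⟨col, ?_⟩
    rintro ⟨e1, e2, e3, h12, -, h23, hc12, hc23, heq⟩
    have hrel : e2 - e3 = -b1 / b2 * (e1 - e3) := by
      field_simp
      linear_combination heq - e3 * hsum
    exact (hcol e2 e1 e3 hc12.symm (hc12 ▸ hc23) hrel).elim h12.symm h23
end

section
/- Let V be a vector space over ℚ. Then the following are equivalent: (1) for every ℵ0-coloring of V there exist four pairwise distinct vectors e1, e2, e3, e4 ∈ V of the same color such that e1 + e2 = e3 + e4; (2) the dimension of V over ℚ (i.e., the cardinality of a basis) is at least ℵ2. -/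
/-!
If `dim V ≤ ℵ₁`, embed `V` additively into `W →₀ ℚ`, where `W = ω₁` is well ordered with
countable initial segments. Fix injections `Iic t ↪ ℕ` and colour `g` by its transport to
`ℕ →₀ ℚ` along the injection of `Iic (max (supp g))`; then `g` is determined by its colour
and the top of its support. In `e1 + e2 = e3 + e4` every top is at most the maximum of the
other three, so two of the four tops coincide, and two distinct vectors of one colour are equal.

If `dim V ≥ ℵ₂`, take independent vectors `x_a` (`a ∈ A`, `|A| = ℵ₁`) and `y_b` (`|B| = ℵ₂`)
and colour the pair `(a, b)` by the colour of `x_a + y_b`. For every `b` two indices `a ≠ a'`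
get the same colour, and since there are only `ℵ₁` such data, some `b ≠ b'` share them.
The four vectors `x_a + y_b, x_a' + y_b', x_a + y_b', x_a' + y_b` are then a monochromatic
solution.
-/

open Cardinal

universe u

section Quadruple

variable {V C : Type*} [AddCommGroup V]

def HasMonochromaticQuadruple (χ : V → C) : Prop :=
  ∃ e1 e2 e3 e4 : V,
    e1 ≠ e2 ∧ e1 ≠ e3 ∧ e1 ≠ e4 ∧ e2 ≠ e3 ∧ e2 ≠ e4 ∧ e3 ≠ e4 ∧
    χ e1 = χ e2 ∧ χ e2 = χ e3 ∧ χ e3 = χ e4 ∧ e1 + e2 = e3 + e4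

theorem HasMonochromaticQuadruple.of_comp {U : Type*} [AddCommGroup U] {f : V →+ U}
    (hf : Function.Injective f) {χ : U → C} (h : HasMonochromaticQuadruple (χ ∘ f)) :
    HasMonochromaticQuadruple χ := by
  obtain ⟨e1, e2, e3, e4, h12, h13, h14, h23, h24, h34, c12, c23, c34, hsum⟩ := h
  exact ⟨f e1, f e2, f e3, f e4, hf.ne h12, hf.ne h13, hf.ne h14, hf.ne h23, hf.ne h24,
    hf.ne h34, c12, c23, c34, by rw [← map_add, ← map_add, hsum]⟩

end Quadruple

namespace Finsupp

variable {W M : Type*} [LinearOrder W]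

theorem support_max_le_of_add_eq_add [AddCommGroup M] {a b c d : W →₀ M} (h : a + b = c + d) :
    a.support.max ≤ max (max c.support.max d.support.max) b.support.max := by
  classical
  rw [eq_sub_of_add_eq h, ← Finset.max_union, ← Finset.max_union]
  exact Finset.max_mono (support_sub.trans (Finset.union_subset_union support_add subset_rfl))

theorem not_hasMonochromaticQuadruple_of_injective [AddCommGroup M] {C : Type*}
    {χ : (W →₀ M) → C} (hχ : Function.Injective fun g => (χ g, g.support.max)) :
    ¬ HasMonochromaticQuadruple χ := by
  rintro ⟨e1, e2, e3, e4, h12, h13, h14, h23, h24, h34, c12, c23, c34, hsum⟩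
  have top_ne {g h : W →₀ M} (hne : g ≠ h) (hc : χ g = χ h) : g.support.max ≠ h.support.max :=
    fun htop => hne (hχ (Prod.ext hc htop))
  have := top_ne h12 c12
  have := top_ne h13 (c12.trans c23)
  have := top_ne h14 (c12.trans (c23.trans c34))
  have := top_ne h23 c23
  have := top_ne h24 (c23.trans c34)
  have := top_ne h34 c34
  have := support_max_le_of_add_eq_add hsum
  have := support_max_le_of_add_eq_add ((add_comm e2 e1).trans hsum)
  have := support_max_le_of_add_eq_add hsum.symm
  have := support_max_le_of_add_eq_add ((add_comm e4 e3).trans hsum.symm)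
  grind

theorem exists_injective_prod_support_max (hW : ∀ t : W, (Set.Iic t).Countable)
    [AddCommMonoid M] [Countable M] :
    ∃ χ : (W →₀ M) → ℕ, Function.Injective fun g => (χ g, g.support.max) := by
  have hcode (t : WithBot W) : ∃ code : W → ℕ, Set.InjOn code {y | ↑y ≤ t} := by
    induction t with
    | bot => exact ⟨0, by simp⟩
    | coe t => simpa [← Set.Iic_def] using Set.countable_iff_exists_injOn.mp (hW t)
  choose code hcode using hcode
  obtain ⟨enc, henc⟩ := Countable.exists_injective_nat (ℕ →₀ M)
  refine ⟨fun g => enc (g.mapDomain (code g.support.max)), fun g h hgh => ?_⟩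
  obtain ⟨hχ, htop⟩ := Prod.mk.inj hgh
  have hsupp (g : W →₀ M) : (g.support : Set W) ⊆ {y | ↑y ≤ g.support.max} :=
    fun y hy => Finset.le_max hy
  simp only [← htop] at hχ
  exact mapDomain_injOn _ (hcode _) (hsupp g) (htop ▸ hsupp h) (henc hχ)

end Finsupp

theorem exists_linearMap_finsupp_injective_of_rank_le {K : Type*} {V W : Type u}
    [DivisionRing K] [AddCommGroup V] [Module K V] (h : Module.rank K V ≤ #W) :
    ∃ f : V →ₗ[K] W →₀ K, Function.Injective f := by
  let b := Module.Basis.ofVectorSpace K V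
  obtain ⟨e⟩ := (Cardinal.le_def _ W).mp (b.mk_eq_rank''.trans_le h)
  exact ⟨Finsupp.lmapDomain K K e ∘ₗ b.repr.toLinearMap,
    (Finsupp.mapDomain_injective e.injective).comp b.repr.injective⟩

theorem exists_coloring_not_hasMonochromaticQuadruple {K : Type*} {V : Type u} [DivisionRing K]
    [Countable K] [AddCommGroup V] [Module K V] (h : Module.rank K V < aleph 2) :
    ∃ χ : V → ℕ, ¬ HasMonochromaticQuadruple χ := by
  let W := (aleph.{u} 1).ord.ToType
  have hW (t : W) : (Set.Iic t).Countable := by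
    rw [← Set.Iio_insert, Set.countable_insert, ← le_aleph0_iff_set_countable, ← lt_aleph_one_iff]
    simpa [W] using mk_Iio_lt t (by simp [W])
  have hrank : Module.rank K V ≤ #W := by
    rwa [mk_toType, card_ord, ← Order.lt_succ_iff, succ_aleph, one_add_one_eq_two]
  obtain ⟨f, hf⟩ := exists_linearMap_finsupp_injective_of_rank_le hrank
  obtain ⟨χ, hχ⟩ := Finsupp.exists_injective_prod_support_max hW (M := K)
  exact ⟨χ ∘ f, fun hχf => Finsupp.not_hasMonochromaticQuadruple_of_injective hχ
    (hχf.of_comp (f := f.toAddMonoidHom) hf)⟩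

theorem LinearIndependent.add_ne_add {ι R M : Type*} [Semiring R] [Nontrivial R]
    [AddCommMonoid M] [Module R M] {v : ι → M} (hv : LinearIndependent R v) {i j k l : ι}
    (hij : i ≠ j) (hik : i ≠ k) (hil : i ≠ l) : v i + v j ≠ v k + v l := by
  intro h
  have := congrArg (· i) <| hv.finsuppLinearCombination_injective
    (a₁ := .single i 1 + .single j 1) (a₂ := .single k 1 + .single l 1) (by simpa using h)
  simp [hij.symm, hik.symm, hil.symm] at this

theorem exists_monochromatic_rectangle {A B : Type u} [Uncountable A] (hAB : #A < #B)
    (c : A → B → ℕ) :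
    ∃ a a' b b', a ≠ a' ∧ b ≠ b' ∧ c a b = c a' b' ∧ c a' b' = c a b' ∧ c a b' = c a' b := by
  have hpair (b : B) : ∃ p : A × A, p.1 ≠ p.2 ∧ c p.1 b = c p.2 b := by
    obtain ⟨a, a', heq, hne⟩ := Function.not_injective_iff.mp
      fun hinj : Function.Injective (c · b) => not_countable hinj.countable
    exact ⟨(a, a'), hne, heq⟩
  choose p hp using hpair
  have hcard : #((A × A) × ℕ) < #B := by
    simpa [mk_prod, mul_eq_self (aleph0_le_mk A), mul_eq_left (aleph0_le_mk A)] using hAB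
  obtain ⟨b, b', heq, hne⟩ := Function.not_injective_iff.mp
    fun hinj : Function.Injective (fun b => (p b, c (p b).1 b)) =>
      (mk_le_of_injective hinj).not_gt hcard
  obtain ⟨hp_eq, hc_eq⟩ := Prod.mk.inj heq
  obtain ⟨hne_a, hc_b⟩ := hp b
  have hc_b' := (hp b').2
  rw [← hp_eq] at hc_eq hc_b'
  exact ⟨(p b).1, (p b).2, b, b', hne_a, hne, hc_eq.trans hc_b', hc_b'.symm,
    hc_eq.symm.trans hc_b⟩

theorem LinearIndependent.hasMonochromaticQuadruple {R V : Type*} {A B : Type u} [Semiring R]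
    [Nontrivial R] [AddCommGroup V] [Module R V] {v : A ⊕ B → V} (hv : LinearIndependent R v)
    [Uncountable A] (hAB : #A < #B) (χ : V → ℕ) : HasMonochromaticQuadruple χ := by
  obtain ⟨a, a', b, b', ha, hb, c1, c2, c3⟩ :=
    exists_monochromatic_rectangle hAB fun a b => χ (v (.inl a) + v (.inr b))
  refine ⟨v (.inl a) + v (.inr b), v (.inl a') + v (.inr b'), v (.inl a) + v (.inr b'),
    v (.inl a') + v (.inr b), hv.add_ne_add (by simp) (by simpa) (by simp), ?_, ?_, ?_, ?_,
    hv.add_ne_add (by simp) (by simpa) (by simp), c1, c2, c3, by abel⟩ <;>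
  simp [hv.injective.eq_iff, ha, hb, ha.symm, hb.symm]

theorem hasMonochromaticQuadruple_of_aleph_two_le_rank {K : Type*} {V : Type u} [DivisionRing K]
    [AddCommGroup V] [Module K V] (h : aleph 2 ≤ Module.rank K V) (χ : V → ℕ) :
    HasMonochromaticQuadruple χ := by
  let A := (aleph.{u} 1).out
  let B := (aleph.{u} 2).out
  have : Uncountable A := aleph0_lt_mk_iff.mp (by simp [A])
  obtain ⟨s, hs, hli⟩ := le_rank_iff_exists_linearIndependent.mp h
  obtain ⟨e⟩ : Nonempty (A ⊕ B ≃ s) := Cardinal.eq.mp (by simp [A, B, hs])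
  exact (hli.comp e e.injective).hasMonochromaticQuadruple (by simp [A, B]) χ

/-- For a vector space `V` over `ℚ`: every `ℵ₀`-coloring of `V` admits four
pairwise distinct monochromatic vectors with `e1 + e2 = e3 + e4` iff the
dimension of `V` over `ℚ` is at least `ℵ₂`. -/
theorem S_vector_space_iff_rank (V : Type*) [AddCommGroup V] [Module ℚ V] :
    (∀ COL : V → ℕ,
      ∃ e1 e2 e3 e4 : V,
        e1 ≠ e2 ∧ e1 ≠ e3 ∧ e1 ≠ e4 ∧ e2 ≠ e3 ∧ e2 ≠ e4 ∧ e3 ≠ e4 ∧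
        COL e1 = COL e2 ∧ COL e2 = COL e3 ∧ COL e3 = COL e4 ∧
        e1 + e2 = e3 + e4) ↔
    Cardinal.aleph 2 ≤ Module.rank ℚ V := by
  refine ⟨fun h => not_lt.mp fun hlt => ?_, hasMonochromaticQuadruple_of_aleph_two_le_rank⟩
  obtain ⟨χ, hχ⟩ := exists_coloring_not_hasMonochromaticQuadruple hlt
  exact hχ (h χ)
end
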